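/- arXiv:2501.00306 — 8 statements merged into one kernel-verified Lean document; each statement's English description precedes it below -/
import Mathlib

section
/- Theorem 1 (main result): The spectral radius 𝐫 of the memory operator 𝐦, acting as a bounded linear operator on C(𝒮, ℝ), is bounded below by the spectral radius r of the mean reproduction matrix m; that is, 𝐫 ≥ r. -/
open Filter Topology

/-- Concatenation of a type `t` with a memory sequence `x`. -/
def memCons {S : Type*} (t : S) (x : ℕ → S) : ℕ → S
  | 0 => t
  | n + 1 => x n

/-!
For `0 < c < r`, primitivity of `m` yields `h ≥ 1` on `S` with `c h ≤ m h`. Test `𝐦` on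
`F x = ∏ᵢ h(xᵢ)^{wᵢ}`, where `wᵢ = ∑_{n ≥ i} τ(n)` are the tail weights (summable because `τ`
has finite mean, and `w₀ = 1`). Then `F(t x) = h(t) P(x)` with `P` built from the shifted weights,
so `𝐦F(x) = (∑ⱼ τⱼ (m h)(xⱼ)) P(x) ≥ c (∑ⱼ τⱼ h(xⱼ)) P(x) ≥ c F(x)` by weighted AM–GM and
`wᵢ = τᵢ + wᵢ₊₁`. As `𝐦` is positive, `𝐦ᵏF ≥ cᵏF`, hence `‖𝐦ᵏ‖ ≥ cᵏ F(x₀) / ‖F‖`, and Gelfand's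
formula gives `𝐫 ≥ c`.
-/

open scoped Matrix

lemma eventually_pow_lt_of_tendsto_rpow_one_div {a : ℕ → ℝ} {r μ : ℝ} (ha : ∀ k, 0 ≤ a k)
    (hr : Tendsto (fun k : ℕ => a k ^ ((1 : ℝ) / k)) atTop (𝓝 r)) (hμ : 0 ≤ μ) (hμr : μ < r) :
    ∀ᶠ k in atTop, μ ^ k < a k := by
  filter_upwards [hr.eventually (eventually_gt_nhds hμr), eventually_ge_atTop 1] with k hk hk1
  calc μ ^ k < (a k ^ ((1 : ℝ) / k)) ^ k := pow_lt_pow_left₀ hk hμ (by omega)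
    _ = a k := by
      rw [← Real.rpow_natCast, ← Real.rpow_mul (ha k), one_div_mul_cancel (by positivity),
        Real.rpow_one]

lemma le_of_pow_le_mul_of_tendsto_rpow_one_div {a : ℕ → ℝ} {R c C : ℝ}
    (hR : Tendsto (fun k : ℕ => a k ^ ((1 : ℝ) / k)) atTop (𝓝 R)) (hc : 0 ≤ c) (hC : 0 < C)
    (h : ∀ k, c ^ k ≤ C * a k) : c ≤ R := by
  have hroot : Tendsto (fun k : ℕ => c / C ^ ((1 : ℝ) / k)) atTop (𝓝 c) := by
    have hC1 := (tendsto_const_nhds (x := C)).rpow tendsto_one_div_atTop_nhds_zero_nat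
      (Or.inl hC.ne')
    rw [Real.rpow_zero] at hC1
    simpa only [div_one] using! (tendsto_const_nhds (x := c)).div hC1 one_ne_zero
  refine le_of_tendsto_of_tendsto hroot hR ?_
  filter_upwards [eventually_ge_atTop 1] with k hk
  have hak : c ^ k / C ≤ a k := by rw [div_le_iff₀' hC]; exact h k
  calc c / C ^ ((1 : ℝ) / k) = (c ^ k / C) ^ ((1 : ℝ) / k) := by
        rw [Real.div_rpow (by positivity) hC.le, ← Real.rpow_natCast, ← Real.rpow_mul hc,
          mul_one_div_cancel (by positivity), Real.rpow_one]
    _ ≤ a k ^ ((1 : ℝ) / k) := by gcongr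

section OrderedModule

variable {E : Type*} [AddCommGroup E] [PartialOrder E] [Module ℝ E]

lemma Module.End.monotone_pow {f : Module.End ℝ E} (hf : Monotone f) (k : ℕ) :
    Monotone (f ^ k) := by
  rw [Module.End.coe_pow]
  exact hf.iterate k

lemma Module.End.pow_apply_nonneg {f : Module.End ℝ E} (hf : Monotone f) {v : E}
    (hv : 0 ≤ v) (k : ℕ) : 0 ≤ (f ^ k) v :=
  map_zero (f ^ k) ▸ monotone_pow hf k hv

-- `h = ∑_{i < K} μ⁻ⁱ fⁱ v` telescopes: `f h - μ h = μ^{1-K} fᴷ v - μ v`.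
lemma Module.End.exists_le_smul_le_apply [IsOrderedAddMonoid E] [PosSMulMono ℝ E]
    {f : Module.End ℝ E} (hf : Monotone f) {v : E} (hv : 0 ≤ v) {μ : ℝ} (hμ : 0 < μ) {K : ℕ}
    (hK : 1 ≤ K) (hKv : μ ^ K • v ≤ (f ^ K) v) :
    ∃ h, v ≤ h ∧ μ • h ≤ f h := by
  obtain ⟨K, rfl⟩ : ∃ K', K = K' + 1 := ⟨K - 1, by omega⟩
  set u : ℕ → E := fun i => μ⁻¹ ^ i • (f ^ i) v
  have hu : ∀ i, 0 ≤ u i := fun i =>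
    smul_nonneg (by positivity) (Module.End.pow_apply_nonneg hf hv i)
  have hfu : ∀ i, f (u i) = μ • u (i + 1) := fun i => by
    simp only [u, map_smul, smul_smul, pow_succ', Module.End.mul_apply]
    congr 1
    field_simp
  refine ⟨∑ i ∈ Finset.range (K + 1), u i, ?_, ?_⟩
  · calc v = u 0 := by simp [u]
      _ ≤ _ := Finset.single_le_sum (fun i _ => hu i) (by simp)
  · have hlast : μ • v ≤ μ • u (K + 1) := by
      have := smul_le_smul_of_nonneg_left hKv (by positivity : 0 ≤ μ⁻¹ ^ (K + 1))
      rw [smul_smul, ← mul_pow, inv_mul_cancel₀ hμ.ne', one_pow, one_smul] at this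
      exact smul_le_smul_of_nonneg_left this hμ.le
    rw [map_sum, Finset.sum_range_succ', Finset.sum_range_succ, smul_add, Finset.smul_sum]
    simp only [hfu]
    simpa [u] using hlast

lemma Module.End.pow_smul_le_pow_apply [PosSMulMono ℝ E] {f : Module.End ℝ E} (hf : Monotone f)
    {c : ℝ} (hc : 0 ≤ c) {x : E} (hx : c • x ≤ f x) (k : ℕ) : c ^ k • x ≤ (f ^ k) x := by
  induction k with
  | zero => simp
  | succ k ih =>
    calc c ^ (k + 1) • x = c • c ^ k • x := by rw [pow_succ', mul_smul]
      _ ≤ c • (f ^ k) x := smul_le_smul_of_nonneg_left ih hc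
      _ = (f ^ k) (c • x) := (map_smul _ _ _).symm
      _ ≤ (f ^ k) (f x) := monotone_pow hf k hx
      _ = (f ^ (k + 1)) x := by rw [pow_succ, Module.End.mul_apply]

end OrderedModule

section Matrix

variable {S : Type*} [Fintype S] {A : Matrix S S ℝ}

lemma Matrix.monotone_mulVec (hA : ∀ s t, 0 ≤ A s t) : Monotone (A *ᵥ ·) := fun _ _ hvw s =>
  Finset.sum_le_sum fun t _ => mul_le_mul_of_nonneg_left (hvw t) (hA s t)

lemma Matrix.mul_norm_le_mulVec_apply {δ : ℝ} (hδ : 0 ≤ δ) (hA : ∀ s t, δ ≤ A s t)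
    {v : S → ℝ} (hv : 0 ≤ v) (s : S) : δ * ‖v‖ ≤ (A *ᵥ v) s := by
  have hA0 : ∀ s t, 0 ≤ A s t := fun s t => hδ.trans (hA s t)
  rw [← abs_of_nonneg hδ, ← Real.norm_eq_abs, ← norm_smul]
  refine (pi_norm_le_iff_of_nonneg (by simpa using Matrix.monotone_mulVec hA0 hv s)).2
    fun t => ?_
  rw [Pi.smul_apply, smul_eq_mul, Real.norm_eq_abs, abs_of_nonneg (mul_nonneg hδ (hv t))]
  calc δ * v t ≤ A s t * v t := mul_le_mul_of_nonneg_right (hA s t) (hv t)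
    _ ≤ (A *ᵥ v) s := Finset.single_le_sum (f := fun u => A s u * v u)
        (fun u _ => mul_nonneg (hA0 s u) (hv u)) (Finset.mem_univ t)

lemma ContinuousLinearMap.norm_le_norm_apply_one {f : (S → ℝ) →L[ℝ] (S → ℝ)}
    (hf : Monotone f) : ‖f‖ ≤ ‖f 1‖ := by
  refine f.opNorm_le_bound (norm_nonneg _) fun v => (pi_norm_le_iff_of_nonneg (by positivity)).2
    fun s => ?_
  have hlow : f (-(‖v‖ • 1)) ≤ f v := hf fun t => by
    simpa using neg_abs_le (v t) |>.trans' (neg_le_neg (norm_le_pi_norm v t))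
  have hup : f v ≤ f (‖v‖ • 1) := hf fun t => by
    simpa using (le_abs_self (v t)).trans (norm_le_pi_norm v t)
  have hlow_s : -(‖v‖ * f 1 s) ≤ f v s := by simpa using hlow s
  have hup_s : f v s ≤ ‖v‖ * f 1 s := by simpa using hup s
  have hf1 : f 1 s ≤ ‖f 1‖ := (le_abs_self _).trans (norm_le_pi_norm (f 1) s)
  rw [Real.norm_eq_abs, abs_le]
  constructor <;> nlinarith [norm_nonneg v]

variable {M : (S → ℝ) →L[ℝ] (S → ℝ)}

lemma pow_apply_eq_pow_mulVec [DecidableEq S] (hM : ∀ v, M v = A *ᵥ v) (n : ℕ)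
    (v : S → ℝ) : (M ^ n) v = (A ^ n) *ᵥ v := by
  induction n generalizing v with
  | zero => simp
  | succ n ih => rw [pow_succ, mul_apply_eq_comp, ih, hM, Matrix.mulVec_mulVec, pow_succ]

end Matrix

section Primitive

variable {S : Type*} [Fintype S] [DecidableEq S] [Nonempty S] {A : Matrix S S ℝ}
  {M : (S → ℝ) →L[ℝ] (S → ℝ)}

-- Primitivity makes every entry of `M^(ℓ + n) 1` at least `δ ‖Mⁿ‖`, where `δ = min (A^ℓ)`.
lemma Matrix.IsPrimitive.exists_pow_smul_one_le (hA : A.IsPrimitive) (hM : ∀ v, M v = A *ᵥ v)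
    {r μ : ℝ} (hr : Tendsto (fun k : ℕ => ‖M ^ k‖ ^ ((1 : ℝ) / k)) atTop (𝓝 r))
    (hμ : 0 < μ) (hμr : μ < r) :
    ∃ K, 1 ≤ K ∧ μ ^ K • (1 : S → ℝ) ≤ (M ^ K) 1 := by
  obtain ⟨ℓ, hℓ, hApos⟩ := hA.exists_pos_pow
  obtain ⟨p, hp⟩ := Finite.exists_min fun p : S × S => (A ^ ℓ) p.1 p.2
  set δ := (A ^ ℓ) p.1 p.2
  have hδ : 0 < δ := hApos p.1 p.2
  obtain ⟨μ', hμμ', hμ'r⟩ := exists_between hμr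
  have hμ' : 0 < μ' := hμ.trans hμμ'
  have hgap : ∀ᶠ n : ℕ in atTop, μ ^ ℓ * (μ / μ') ^ n ≤ δ := by
    have := (tendsto_pow_atTop_nhds_zero_of_lt_one (by positivity)
      ((div_lt_one hμ').2 hμμ')).const_mul (μ ^ ℓ)
    rw [mul_zero] at this
    exact this.eventually (eventually_le_nhds hδ)
  obtain ⟨n, hn, hgrowth⟩ := (hgap.and (eventually_pow_lt_of_tendsto_rpow_one_div
    (fun k => norm_nonneg (M ^ k)) hr hμ'.le hμ'r)).exists
  refine ⟨ℓ + n, by omega, fun s => ?_⟩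
  have hmono_n : Monotone (M ^ n) := by
    rw [funext (pow_apply_eq_pow_mulVec hM n)]
    exact Matrix.monotone_mulVec (Matrix.pow_apply_nonneg hA.nonneg n)
  have hMn : 0 ≤ (M ^ n) 1 := map_zero (M ^ n) ▸ hmono_n zero_le_one
  calc (μ ^ (ℓ + n) • (1 : S → ℝ)) s = μ ^ ℓ * (μ / μ') ^ n * μ' ^ n := by
        rw [div_pow, pow_add]; field_simp; simp
    _ ≤ δ * ‖M ^ n‖ := mul_le_mul hn hgrowth.le (by positivity) hδ.le
    _ ≤ δ * ‖(M ^ n) 1‖ := by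
        gcongr
        exact ContinuousLinearMap.norm_le_norm_apply_one hmono_n
    _ ≤ (A ^ ℓ *ᵥ (M ^ n) 1) s :=
        Matrix.mul_norm_le_mulVec_apply hδ.le (fun s t => hp (s, t)) hMn s
    _ = (M ^ (ℓ + n)) 1 s := by rw [← pow_apply_eq_pow_mulVec hM, pow_add, mul_apply_eq_comp]

lemma Matrix.IsPrimitive.exists_one_le_smul_le (hA : A.IsPrimitive) (hM : ∀ v, M v = A *ᵥ v)
    {r μ : ℝ} (hr : Tendsto (fun k : ℕ => ‖M ^ k‖ ^ ((1 : ℝ) / k)) atTop (𝓝 r))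
    (hμ : 0 < μ) (hμr : μ < r) : ∃ h : S → ℝ, 1 ≤ h ∧ μ • h ≤ M h := by
  obtain ⟨K, hK, hKv⟩ := hA.exists_pow_smul_one_le hM hr hμ hμr
  have hmono : Monotone (M : Module.End ℝ (S → ℝ)) := by
    simpa only [ContinuousLinearMap.coe_coe, funext hM] using Matrix.monotone_mulVec hA.nonneg
  exact Module.End.exists_le_smul_le_apply hmono zero_le_one hμ hK
    (by rw [← ContinuousLinearMap.toLinearMap_pow]; exact hKv)

end Primitive

section TailSum

noncomputable def tailSum (τ : ℕ → ℝ) (i : ℕ) : ℝ := ∑' n, τ (n + i)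

variable {τ : ℕ → ℝ}

lemma tailSum_zero (hτ : HasSum τ 1) : tailSum τ 0 = 1 := by
  simpa [tailSum] using hτ.tsum_eq

lemma tailSum_eq_add (hτ : Summable τ) (i : ℕ) : tailSum τ i = τ i + tailSum τ (i + 1) := by
  rw [tailSum, ((summable_nat_add_iff i).2 hτ).tsum_eq_zero_add, zero_add, tailSum]
  simp only [add_right_comm _ 1 i, add_assoc]

-- `∑ᵢ tailSum τ i = ∑ₖ (k + 1) τ k`, counting the pairs `(n, i)` with `n + i = k`.
lemma summable_tailSum (hτ0 : ∀ j, 0 ≤ τ j) (hτ : Summable τ)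
    (hmean : Summable fun j : ℕ => (j : ℝ) * τ j) : Summable (tailSum τ) := by
  have hpairs : Summable fun p : ℕ × ℕ => τ (p.2 + p.1) := by
    rw [← Finset.HasAntidiagonal.sigmaAntidiagonalEquivProd.summable_iff]
    refine (summable_sigma_of_nonneg fun _ => hτ0 _).2 ?_
    refine ⟨fun k => Summable.of_finite, (hmean.add hτ).congr fun k => ?_⟩
    simp only [Finset.HasAntidiagonal.sigmaAntidiagonalEquivProd_apply, tsum_fintype,
      Finset.univ_eq_attach]
    rw [Finset.sum_attach _ fun p : ℕ × ℕ => τ (p.2 + p.1),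
      Finset.sum_congr rfl fun p hp => by
        rw [add_comm, Finset.HasAntidiagonal.mem_antidiagonal.1 hp],
      Finset.sum_const, Finset.Nat.card_antidiagonal, nsmul_eq_mul]
    push_cast
    ring
  exact ((summable_prod_of_nonneg fun _ => hτ0 _).1 hpairs).2

end TailSum

-- Tangent line of `exp` at `c = ∑ τⱼ aⱼ`: `exp c * (1 + a - c) ≤ exp a`, averaged against `τ`.
lemma Real.exp_tsum_mul_le_tsum_mul_exp {ι : Type*} {τ a : ι → ℝ} (hτ0 : ∀ j, 0 ≤ τ j)
    (hτ : HasSum τ 1) (ha : Summable fun j => τ j * a j)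
    (hea : Summable fun j => τ j * Real.exp (a j)) :
    Real.exp (∑' j, τ j * a j) ≤ ∑' j, τ j * Real.exp (a j) := by
  set c := ∑' j, τ j * a j
  have htangent : ∀ j, Real.exp c * (τ j * a j) + (Real.exp c - Real.exp c * c) * τ j
      ≤ τ j * Real.exp (a j) := fun j => by
    have := mul_le_mul_of_nonneg_left (Real.add_one_le_exp (a j - c)) (Real.exp_nonneg c)
    rw [← Real.exp_add, add_sub_cancel] at this
    nlinarith [hτ0 j]
  calc Real.exp c
      = ∑' j, (Real.exp c * (τ j * a j) + (Real.exp c - Real.exp c * c) * τ j) := by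
        rw [(ha.mul_left _).tsum_add (hτ.summable.mul_left _), tsum_mul_left, tsum_mul_left,
          hτ.tsum_eq]
        ring
    _ ≤ ∑' j, τ j * Real.exp (a j) :=
        Summable.tsum_le_tsum htangent ((ha.mul_left _).add (hτ.summable.mul_left _)) hea

section WeightedSum

variable {S : Type*} [Finite S]

lemma Summable.mul_comp_of_finite {w : ℕ → ℝ} (hw : Summable w) (g : S → ℝ) (x : ℕ → S) :
    Summable fun i => w i * g (x i) := by
  obtain ⟨C, hC⟩ := Finite.bddAbove_range fun s => |g s|
  refine (hw.abs.mul_right C).of_norm_bounded fun i => ?_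
  rw [Real.norm_eq_abs, abs_mul]
  exact mul_le_mul_of_nonneg_left (hC ⟨x i, rfl⟩) (abs_nonneg _)

noncomputable def weightedSum (w : ℕ → ℝ) (g : S → ℝ) (x : ℕ → S) : ℝ := ∑' i, w i * g (x i)

variable {w : ℕ → ℝ}

lemma continuous_weightedSum [TopologicalSpace S] [DiscreteTopology S] (hw : Summable w)
    (g : S → ℝ) : Continuous (weightedSum w g) := by
  obtain ⟨C, hC⟩ := Finite.bddAbove_range fun s => |g s|
  refine continuous_tsum (fun i => continuous_const.mul
    ((continuous_of_discreteTopology (f := g)).comp (continuous_apply i)))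
    (hw.abs.mul_right C) fun i x => ?_
  rw [Real.norm_eq_abs, abs_mul]
  exact mul_le_mul_of_nonneg_left (hC ⟨x i, rfl⟩) (abs_nonneg _)

lemma weightedSum_memCons (hw : Summable w) (g : S → ℝ) (t : S) (x : ℕ → S) :
    weightedSum w g (memCons t x) = w 0 * g t + weightedSum (fun i => w (i + 1)) g x :=
  (hw.mul_comp_of_finite g _).tsum_eq_zero_add

lemma weightedSum_add {w' : ℕ → ℝ} (hw : Summable w) (hw' : Summable w') (g : S → ℝ)
    (x : ℕ → S) : weightedSum (w + w') g x = weightedSum w g x + weightedSum w' g x := by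
  simp only [weightedSum, Pi.add_apply, add_mul]
  exact (hw.mul_comp_of_finite g x).tsum_add (hw'.mul_comp_of_finite g x)

end WeightedSum

section MemoryOperator

variable {S : Type*} [Fintype S]

noncomputable def memoryOp (m : S → S → ℝ) (τ : ℕ → ℝ) (f : (ℕ → S) → ℝ) (x : ℕ → S) :
    ℝ :=
  ∑' j, τ j * ∑ t, m (x j) t * f (memCons t x)

variable {m : S → S → ℝ} {τ : ℕ → ℝ}

lemma memoryOp_mono (hm : ∀ s t, 0 ≤ m s t) (hτ0 : ∀ j, 0 ≤ τ j) (hτ : Summable τ)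
    {f g : (ℕ → S) → ℝ} (hfg : f ≤ g) : memoryOp m τ f ≤ memoryOp m τ g := fun x =>
  Summable.tsum_le_tsum
    (fun j => mul_le_mul_of_nonneg_left
      (Finset.sum_le_sum fun t _ => mul_le_mul_of_nonneg_left (hfg _) (hm _ t)) (hτ0 j))
    (hτ.mul_comp_of_finite (fun s => ∑ t, m s t * f (memCons t x)) x)
    (hτ.mul_comp_of_finite (fun s => ∑ t, m s t * g (memCons t x)) x)

lemma mul_exp_weightedSum_le_memoryOp (hτ0 : ∀ j, 0 ≤ τ j) (hτ : HasSum τ 1)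
    (hmean : Summable fun j : ℕ => (j : ℝ) * τ j) {c : ℝ} (hc : 0 ≤ c) {g : S → ℝ}
    (hg : ∀ s, c * Real.exp (g s) ≤ ∑ t, m s t * Real.exp (g t)) (x : ℕ → S) :
    c * Real.exp (weightedSum (tailSum τ) g x) ≤
      memoryOp m τ (fun y => Real.exp (weightedSum (tailSum τ) g y)) x := by
  have hw := summable_tailSum hτ0 hτ.summable hmean
  set P := Real.exp (weightedSum (fun i => tailSum τ (i + 1)) g x)
  have hsplit : weightedSum (tailSum τ) g x =
      weightedSum τ g x + weightedSum (fun i => tailSum τ (i + 1)) g x := by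
    rw [← weightedSum_add hτ.summable ((summable_nat_add_iff 1).2 hw)]
    congr
    exact funext (tailSum_eq_add hτ.summable)
  have hcons : ∀ t, Real.exp (weightedSum (tailSum τ) g (memCons t x)) = Real.exp (g t) * P :=
    fun t => by rw [weightedSum_memCons hw, tailSum_zero hτ, one_mul, Real.exp_add]
  have hjensen : Real.exp (weightedSum τ g x) ≤ ∑' j, τ j * Real.exp (g (x j)) :=
    Real.exp_tsum_mul_le_tsum_mul_exp hτ0 hτ (hτ.summable.mul_comp_of_finite g x)
      (hτ.summable.mul_comp_of_finite (Real.exp ∘ g) x)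
  calc c * Real.exp (weightedSum (tailSum τ) g x)
      = c * Real.exp (weightedSum τ g x) * P := by rw [hsplit, Real.exp_add, mul_assoc]
    _ ≤ c * (∑' j, τ j * Real.exp (g (x j))) * P := by gcongr
    _ = ∑' j, τ j * (c * Real.exp (g (x j)) * P) := by
        rw [← tsum_mul_left, ← tsum_mul_right]
        congr 1 with j
        ring
    _ ≤ ∑' j, τ j * ((∑ t, m (x j) t * Real.exp (g t)) * P) :=
        Summable.tsum_le_tsum
          (fun j => mul_le_mul_of_nonneg_left
            (mul_le_mul_of_nonneg_right (hg (x j)) (Real.exp_nonneg _)) (hτ0 j))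
          (hτ.summable.mul_comp_of_finite (fun s => c * Real.exp (g s) * P) x)
          (hτ.summable.mul_comp_of_finite (fun s => (∑ t, m s t * Real.exp (g t)) * P) x)
    _ = memoryOp m τ (fun y => Real.exp (weightedSum (tailSum τ) g y)) x := by
        simp only [memoryOp, hcons, Finset.sum_mul, mul_assoc]

end MemoryOperator

lemma ContinuousLinearMap.pow_le_mul_norm_pow {X : Type*} [TopologicalSpace X] [CompactSpace X]
    {T : C(X, ℝ) →L[ℝ] C(X, ℝ)} (hT : Monotone T) {c : ℝ} (hc : 0 ≤ c) {F : C(X, ℝ)}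
    (hF : c • F ≤ T F) {x₀ : X} (hx₀ : 0 < F x₀) : ∃ C > 0, ∀ k, c ^ k ≤ C * ‖T ^ k‖ := by
  have hFx₀ : F x₀ ≤ ‖F‖ := (le_abs_self _).trans (F.norm_coe_le_norm x₀)
  refine ⟨‖F‖ / F x₀, div_pos (hx₀.trans_le hFx₀) hx₀, fun k => ?_⟩
  have hk : c ^ k • F ≤ (T ^ k) F := by
    have := Module.End.pow_smul_le_pow_apply (f := (T : Module.End ℝ C(X, ℝ))) hT hc hF k
    rwa [← ContinuousLinearMap.toLinearMap_pow] at this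
  rw [div_mul_eq_mul_div, le_div_iff₀ hx₀]
  calc c ^ k * F x₀ = (c ^ k • F) x₀ := rfl
    _ ≤ (T ^ k) F x₀ := hk x₀
    _ ≤ ‖(T ^ k) F‖ := (le_abs_self _).trans (((T ^ k) F).norm_coe_le_norm x₀)
    _ ≤ ‖T ^ k‖ * ‖F‖ := (T ^ k).le_opNorm F
    _ = ‖F‖ * ‖T ^ k‖ := mul_comm _ _

theorem spectralRadius_memory_ge_general
    {S : Type*} [Fintype S] [Nonempty S] [DecidableEq S]
    [TopologicalSpace S] [DiscreteTopology S]
    (m : S → S → ℝ)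
    (hm_nonneg : ∀ s t, 0 ≤ m s t)
    (hm_prim : ∃ k : ℕ, 1 ≤ k ∧ ∀ s t, 0 < ((Matrix.of m) ^ k) s t)
    (τ : ℕ → ℝ)
    (hτ_nonneg : ∀ j, 0 ≤ τ j) (hτ_sum : HasSum τ 1)
    (hτ_mean : Summable fun j : ℕ => (j : ℝ) * τ j)
    -- the memory operator `𝐦` as a bounded linear operator on `C(𝒮, ℝ)`
    (T : C(ℕ → S, ℝ) →L[ℝ] C(ℕ → S, ℝ))
    (hT : ∀ (f : C(ℕ → S, ℝ)) (x : ℕ → S),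
      T f x = ∑' j : ℕ, τ j * ∑ t : S, m (x j) t * f (memCons t x))
    -- the matrix `m` viewed as a linear operator on `ℝ^S`
    (M : (S → ℝ) →L[ℝ] (S → ℝ))
    (hM : ∀ (v : S → ℝ) (s : S), M v s = ∑ t : S, m s t * v t)
    -- the two spectral radii, via Gelfand's formula
    (R r : ℝ)
    (hR : Tendsto (fun k : ℕ => ‖T ^ k‖ ^ ((1 : ℝ) / k)) atTop (𝓝 R))
    (hr : Tendsto (fun k : ℕ => ‖M ^ k‖ ^ ((1 : ℝ) / k)) atTop (𝓝 r)) :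
    r ≤ R := by
  have hR0 : 0 ≤ R := ge_of_tendsto' hR fun k => by positivity
  refine le_of_forall_lt_imp_le_of_dense fun c hcr => ?_
  rcases le_or_gt c 0 with hc | hc
  · exact hc.trans hR0
  have hA : (Matrix.of m).IsPrimitive := ⟨hm_nonneg, hm_prim⟩
  obtain ⟨h, hh1, hch⟩ := hA.exists_one_le_smul_le (fun v => funext (hM v)) hr hc hcr
  have hh0 : ∀ s, 0 < h s := fun s => one_pos.trans_le (hh1 s)
  have hg : ∀ s, c * Real.exp (Real.log (h s)) ≤ ∑ t, m s t * Real.exp (Real.log (h t)) :=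
    fun s => by simpa only [Real.exp_log (hh0 _), ← hM, Pi.smul_apply, smul_eq_mul] using hch s
  let F : C(ℕ → S, ℝ) := ⟨fun x => Real.exp (weightedSum (tailSum τ) (Real.log ∘ h) x),
    Real.continuous_exp.comp (continuous_weightedSum
      (summable_tailSum hτ_nonneg hτ_sum.summable hτ_mean) _)⟩
  have hTmono : Monotone T := fun f g hfg => ContinuousMap.le_def.2 fun x => by
    rw [hT, hT]
    exact memoryOp_mono hm_nonneg hτ_nonneg hτ_sum.summable (f := f) (g := g) hfg x
  have hTF : c • F ≤ T F := ContinuousMap.le_def.2 fun x => by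
    rw [ContinuousMap.smul_apply, hT]
    exact mul_exp_weightedSum_le_memoryOp hτ_nonneg hτ_sum hτ_mean hc.le hg x
  obtain ⟨C, hC, hpow⟩ := ContinuousLinearMap.pow_le_mul_norm_pow hTmono hc.le hTF
    (x₀ := fun _ => Classical.arbitrary S) (Real.exp_pos _)
  exact le_of_pow_le_mul_of_tendsto_rpow_one_div hR hc.le hC hpow

/-- **Theorem 1.** The spectral radius `R` of the memory operator `𝐦` (acting as a bounded
linear operator `T` on `C(𝒮, ℝ)`, `𝒮 = S^ℕ`) is bounded below by the spectral radius `r`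
of the mean reproduction matrix `m`; here both spectral radii are given by Gelfand's
formula `lim ‖·^k‖^(1/k)`. -/
theorem spectralRadius_memory_ge
    {S : Type*} [Fintype S] [Nonempty S] [DecidableEq S]
    [TopologicalSpace S] [DiscreteTopology S]
    (m : S → S → ℝ)
    (hm_nonneg : ∀ s t, 0 ≤ m s t)
    (hm_prim : ∃ k : ℕ, 1 ≤ k ∧ ∀ s t, 0 < ((Matrix.of m) ^ k) s t)
    (τ : ℕ → ℝ)
    (hτ_nonneg : ∀ j, 0 ≤ τ j) (hτ_sum : HasSum τ 1)
    (hτ_zero : 0 < τ 0)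
    (hτ_mean : Summable fun j : ℕ => (j : ℝ) * τ j)
    -- the memory operator `𝐦` as a bounded linear operator on `C(𝒮, ℝ)`
    (T : C(ℕ → S, ℝ) →L[ℝ] C(ℕ → S, ℝ))
    (hT : ∀ (f : C(ℕ → S, ℝ)) (x : ℕ → S),
      T f x = ∑' j : ℕ, τ j * ∑ t : S, m (x j) t * f (memCons t x))
    -- the matrix `m` viewed as a linear operator on `ℝ^S`
    (M : (S → ℝ) →L[ℝ] (S → ℝ))
    (hM : ∀ (v : S → ℝ) (s : S), M v s = ∑ t : S, m s t * v t)
    -- the two spectral radii, via Gelfand's formula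
    (R r : ℝ)
    (hR : Tendsto (fun k : ℕ => ‖T ^ k‖ ^ ((1 : ℝ) / k)) atTop (𝓝 R))
    (hr : Tendsto (fun k : ℕ => ‖M ^ k‖ ^ ((1 : ℝ) / k)) atTop (𝓝 r)) :
    r ≤ R :=
  spectralRadius_memory_ge_general m hm_nonneg hm_prim τ hτ_nonneg hτ_sum hτ_mean T hT M hM R r hR
    hr
end

section
/- Feller property (Proposition 2.1, first part): For every continuous function f : 𝒮 → ℝ (for the product topology), the function 𝐦f : 𝒮 → ℝ is continuous. -/
theorem continuous_memCons {S : Type*} [TopologicalSpace S] (t : S) :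
    Continuous (memCons t) := by
  refine continuous_pi fun n => ?_
  cases n with
  | zero => exact continuous_const
  | succ k => exact continuous_apply k

theorem continuous_tsum_mul_of_bounded {ι X : Type*} [TopologicalSpace X] {τ : ι → ℝ}
    (hτ : Summable τ) {g : ι → X → ℝ} (hg : ∀ j, Continuous (g j)) {C : ℝ}
    (hC : ∀ j x, ‖g j x‖ ≤ C) :
    Continuous fun x => ∑' j, τ j * g j x := by
  refine continuous_tsum (u := fun j => ‖τ j‖ * C) (fun j => continuous_const.mul (hg j))
    (hτ.norm.mul_right C) fun j x => ?_
  rw [norm_mul]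
  exact mul_le_mul_of_nonneg_left (hC j x) (norm_nonneg _)

theorem memory_operator_feller_general
    {S : Type*} [Fintype S]
    [TopologicalSpace S] [DiscreteTopology S]
    (m : S → S → ℝ)
    (τ : ℕ → ℝ)
    (hτ_sum : HasSum τ 1)
    (f : (ℕ → S) → ℝ) (hf : Continuous f) :
    Continuous (fun x : ℕ → S =>
      ∑' j : ℕ, τ j * ∑ t : S, m (x j) t * f (memCons t x)) := by
  set G : S × (ℕ → S) → ℝ := fun p => ∑ t : S, m p.1 t * f (memCons t p.2)
  have hG : Continuous G := continuous_finsetSum _ fun t _ =>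
    ((continuous_of_discreteTopology (f := fun s => m s t)).comp continuous_fst).mul
      (hf.comp ((continuous_memCons t).comp continuous_snd))
  obtain ⟨C, hC⟩ := (HasCompactSupport.of_compactSpace G).exists_bound_of_continuous hG
  exact continuous_tsum_mul_of_bounded (g := fun j x => G (x j, x)) hτ_sum.summable
    (fun j => hG.comp ((continuous_apply j).prodMk continuous_id)) fun j x => hC _

/-- **Proposition 2.1, first part (Feller property).** For every continuous
`f : 𝒮 → ℝ` (product topology on `𝒮 = S^ℕ`, `S` discrete), the function
`𝐦f : 𝒮 → ℝ` is continuous. -/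
theorem memory_operator_feller
    {S : Type*} [Fintype S] [Nonempty S] [DecidableEq S]
    [TopologicalSpace S] [DiscreteTopology S]
    (m : S → S → ℝ)
    (hm_nonneg : ∀ s t, 0 ≤ m s t)
    (τ : ℕ → ℝ)
    (hτ_nonneg : ∀ j, 0 ≤ τ j) (hτ_sum : HasSum τ 1)
    (f : (ℕ → S) → ℝ) (hf : Continuous f) :
    Continuous (fun x : ℕ → S =>
      ∑' j : ℕ, τ j * ∑ t : S, m (x j) t * f (memCons t x)) :=
  memory_operator_feller_general m τ hτ_sum f hf
end

section
/- Failure of the strong Feller property (Proposition 2.1, second part): Assume S has at least two elements, every row of m has at least one strictly positive entry, and the support {j ∈ ℕ : τ(j) > 0} of τ is unbounded. Then there exists a bounded Borel measurable function f : 𝒮 → ℝ such that 𝐦f is not continuous. -/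
/-- **Proposition 2.1, second part (failure of the strong Feller property).**
If `S` has at least two elements, every row of `m` has a strictly positive entry,
and the support of `τ` is unbounded, then there exists a bounded Borel measurable
function `f : 𝒮 → ℝ` such that `𝐦f` is not continuous. -/
theorem memory_operator_not_strong_feller
    {S : Type*} [Fintype S] [Nontrivial S] [DecidableEq S]
    [TopologicalSpace S] [DiscreteTopology S]
    [MeasurableSpace S] [BorelSpace S]
    (m : S → S → ℝ)
    (hm_nonneg : ∀ s t, 0 ≤ m s t)
    (hm_row : ∀ s, ∃ t, 0 < m s t)
    (τ : ℕ → ℝ)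
    (hτ_nonneg : ∀ j, 0 ≤ τ j) (hτ_sum : HasSum τ 1)
    (hτ_supp : ∀ N : ℕ, ∃ j ≥ N, 0 < τ j) :
    ∃ f : (ℕ → S) → ℝ, Measurable f ∧ (∃ C : ℝ, ∀ x, |f x| ≤ C) ∧
      ¬ Continuous (fun x : ℕ → S =>
        ∑' j : ℕ, τ j * ∑ t : S, m (x j) t * f (memCons t x)) := by
  classical
  obtain ⟨a, b, hab⟩ := exists_pair_ne S
  obtain ⟨t0, ht0⟩ := hm_row a
  set xs : ℕ → S := fun _ => a with hxs
  set y0 : ℕ → S := memCons t0 xs with hy0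
  refine ⟨fun y => if y = y0 then 1 else 0, ?_, ⟨1, ?_⟩, ?_⟩
  · exact Measurable.ite (measurableSet_eq) measurable_const measurable_const
  · intro x; dsimp only; split <;> norm_num
  · -- compute the value of the operator
    set G : (ℕ → S) → ℝ := fun x : ℕ → S =>
        ∑' j : ℕ, τ j * ∑ t : S, m (x j) t * (if memCons t x = y0 then (1:ℝ) else 0) with hG
    have hGval : ∀ x, G x = if x = xs then m a t0 else 0 := by
      intro x
      by_cases hx : x = xs
      · have hinner : ∀ j : ℕ, ∑ t : S, m (x j) t * (if memCons t x = y0 then (1:ℝ) else 0)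
            = m a t0 := by
          intro j
          have hiff : ∀ t : S, (memCons t x = y0) ↔ t = t0 := by
            intro t
            constructor
            · intro h; have := congrFun h 0; simpa [memCons, hy0] using this
            · rintro rfl; rw [hx]
          rw [Finset.sum_eq_single t0]
          · simp [hiff]; simp [hx, hxs]
          · intro t _ htne; simp [hiff, htne]
          · intro h; exact absurd (Finset.mem_univ t0) h
        have : G x = ∑' j : ℕ, τ j * m a t0 := tsum_congr fun j => by rw [hinner j]
        rw [this, tsum_mul_right, hτ_sum.tsum_eq]
        simp [hx]
      · have hinner : ∀ j : ℕ, ∑ t : S, m (x j) t * (if memCons t x = y0 then (1:ℝ) else 0)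
            = 0 := by
          intro j
          apply Finset.sum_eq_zero
          intro t _
          have : memCons t x ≠ y0 := by
            intro h
            apply hx
            funext n
            have := congrFun h (n + 1)
            simpa [memCons, hy0] using this
          simp [this]
        have : G x = ∑' j : ℕ, τ j * 0 := tsum_congr fun j => by rw [hinner j]
        simp [this, hx]
    intro hcont
    -- approximating sequence
    set seq : ℕ → (ℕ → S) := fun n k => if k = n then b else a with hseq
    have hseq_ne : ∀ n, seq n ≠ xs := by
      intro n h
      have := congrFun h n
      simp [hseq, hxs] at this
      exact hab this.symm
    have htend : Filter.Tendsto seq Filter.atTop (nhds xs) := by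
      rw [tendsto_pi_nhds]
      intro k
      apply Filter.Tendsto.congr' (f₁ := fun _ => a)
      · filter_upwards [Filter.eventually_gt_atTop k] with n hn
        simp [hseq, hn.ne]
      · exact tendsto_const_nhds
    have h1 : Filter.Tendsto (fun n => G (seq n)) Filter.atTop (nhds (G xs)) :=
      (hcont.tendsto xs).comp htend
    have h2 : ∀ n, G (seq n) = 0 := by
      intro n; rw [hGval]; simp [hseq_ne n]
    have h3 : G xs = m a t0 := by rw [hGval]; simp
    rw [h3] at h1
    have h4 : Filter.Tendsto (fun _ : ℕ => (0:ℝ)) Filter.atTop (nhds (m a t0)) := by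
      simpa [h2] using h1
    exact absurd (tendsto_nhds_unique h4 tendsto_const_nhds) ht0.ne'
end

section
/- Harnack-type bounds for the spectral radii: Let h : S → ℝ be a strictly positive function with Σ_t m(s,t)·h(t) = r·h(s) for all s ∈ S, where r > 0 is the spectral radius of m. Then r · (min_{s∈S} h(s)) / (max_{s∈S} h(s)) ≤ 𝐫 ≤ r · (max_{s∈S} h(s)) / (min_{s∈S} h(s)). -/
/-!
Put `H x = h (x 0)`. As `h` is an `r`-eigenvector of `m` and `τ` is a probability, `T H x` is a
`τ`-average of the values `r * h (x j)`, so `r * min h ≤ T H ≤ r * max h` and therefore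
`(r * min h / max h) • H ≤ T H ≤ (r * max h / min h) • H`. Since `T` is a positive operator these
inequalities iterate to `T ^ k`, and since `H` is bounded away from zero the norm of a positive
operator is controlled by its value at `H`. This gives
`(r * min h / max h) ^ k ≤ ‖T ^ k‖ ≤ (r * max h / min h) ^ k * ‖H‖ / min h`; take `k`-th roots.
-/

open Filter Topology

open Set

section OrderedModule

variable {E : Type*} [AddCommGroup E] [PartialOrder E] [Module ℝ E] [PosSMulMono ℝ E]
  [TopologicalSpace E] {T : E →L[ℝ] E} {H : E} {c : ℝ}

theorem ContinuousLinearMap.pow_apply_le_smul (hT : Monotone T) (hc : 0 ≤ c)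
    (hTH : T H ≤ c • H) (k : ℕ) : (T ^ k) H ≤ c ^ k • H := by
  induction k with
  | zero => simp
  | succ n ih =>
    calc (T ^ (n + 1)) H = T ((T ^ n) H) := by rw [pow_succ']; rfl
      _ ≤ T (c ^ n • H) := hT ih
      _ = c ^ n • T H := map_smul T _ H
      _ ≤ c ^ n • c • H := smul_le_smul_of_nonneg_left hTH (pow_nonneg hc n)
      _ = c ^ (n + 1) • H := by rw [smul_smul, pow_succ]

theorem ContinuousLinearMap.smul_le_pow_apply (hT : Monotone T) (hc : 0 ≤ c)
    (hTH : c • H ≤ T H) (k : ℕ) : c ^ k • H ≤ (T ^ k) H := by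
  induction k with
  | zero => simp
  | succ n ih =>
    calc c ^ (n + 1) • H = c ^ n • c • H := by rw [smul_smul, pow_succ]
      _ ≤ c ^ n • T H := smul_le_smul_of_nonneg_left hTH (pow_nonneg hc n)
      _ = T (c ^ n • H) := (map_smul T _ H).symm
      _ ≤ T ((T ^ n) H) := hT ih
      _ = (T ^ (n + 1)) H := by rw [pow_succ']; rfl

end OrderedModule

namespace ContinuousMap

variable {X : Type*} [TopologicalSpace X] [CompactSpace X]

theorem norm_le_norm_of_nonneg_of_le {f g : C(X, ℝ)} (hf : 0 ≤ f) (hfg : f ≤ g) :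
    ‖f‖ ≤ ‖g‖ :=
  (norm_le _ (norm_nonneg g)).2 fun x => by
    rw [Real.norm_of_nonneg (le_def.1 hf x)]
    exact (le_def.1 hfg x).trans ((le_abs_self _).trans (g.norm_coe_le_norm x))

/-- Every `f` lies between `∓ (‖f‖ / a) • H`. -/
theorem opNorm_le_norm_apply_div_of_monotone {A : C(X, ℝ) →L[ℝ] C(X, ℝ)} (hA : Monotone A)
    {H : C(X, ℝ)} {a : ℝ} (ha : 0 < a) (hH : ∀ x, a ≤ H x) : ‖A‖ ≤ ‖A H‖ / a := by
  refine A.opNorm_le_bound (by positivity) fun f => (norm_le _ (by positivity)).2 fun x => ?_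
  have hf : ∀ y, |f y| ≤ (‖f‖ / a) * H y := fun y =>
    calc |f y| ≤ ‖f‖ := f.norm_coe_le_norm y
      _ = (‖f‖ / a) * a := by field_simp
      _ ≤ (‖f‖ / a) * H y := by gcongr; exact hH y
  have hup : A f ≤ (‖f‖ / a) • A H := by
    rw [← map_smul]; exact hA fun y => (le_abs_self _).trans (hf y)
  have hlow : -((‖f‖ / a) • A H) ≤ A f := by
    rw [← map_smul, ← map_neg]; exact hA fun y => by simpa using neg_le_of_abs_le (hf y)
  have hAH : (A H) x ≤ ‖A H‖ := (le_abs_self _).trans ((A H).norm_coe_le_norm x)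
  calc |(A f) x| ≤ (‖f‖ / a) * (A H) x := abs_le.2 ⟨by simpa using hlow x, by simpa using hup x⟩
    _ ≤ (‖f‖ / a) * ‖A H‖ := by gcongr
    _ = ‖A H‖ / a * ‖f‖ := by ring

end ContinuousMap

theorem le_of_pow_le_of_tendsto_rpow {u : ℕ → ℝ} {c R : ℝ} (hc : 0 ≤ c) (hu : ∀ k, c ^ k ≤ u k)
    (hR : Tendsto (fun k : ℕ => u k ^ ((1 : ℝ) / k)) atTop (𝓝 R)) : c ≤ R := by
  refine ge_of_tendsto hR ((eventually_ne_atTop 0).mono fun k hk => ?_)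
  calc c = (c ^ k) ^ ((1 : ℝ) / k) := by rw [one_div, Real.pow_rpow_inv_natCast hc hk]
    _ ≤ u k ^ ((1 : ℝ) / k) := by gcongr; exact hu k

theorem le_of_le_pow_mul_of_tendsto_rpow {u : ℕ → ℝ} {c C R : ℝ} (hu0 : ∀ k, 0 ≤ u k)
    (hc : 0 ≤ c) (hC : 0 < C) (hu : ∀ k, u k ≤ c ^ k * C)
    (hR : Tendsto (fun k : ℕ => u k ^ ((1 : ℝ) / k)) atTop (𝓝 R)) : R ≤ c := by
  have hlim : Tendsto (fun k : ℕ => c * C ^ ((1 : ℝ) / k)) atTop (𝓝 c) := by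
    simpa using ((tendsto_const_nhds (x := C)).rpow tendsto_one_div_atTop_nhds_zero_nat
      (Or.inl hC.ne')).const_mul c
  refine le_of_tendsto_of_tendsto hR hlim ((eventually_ne_atTop 0).mono fun k hk => ?_)
  calc u k ^ ((1 : ℝ) / k) ≤ (c ^ k * C) ^ ((1 : ℝ) / k) := by gcongr; exacts [hu0 k, hu k]
    _ = c * C ^ ((1 : ℝ) / k) := by
      rw [Real.mul_rpow (by positivity) hC.le, one_div, Real.pow_rpow_inv_natCast hc hk]

theorem ContinuousMap.harnack_bounds_of_monotone {X : Type*} [TopologicalSpace X]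
    [CompactSpace X] [Nonempty X] {T : C(X, ℝ) →L[ℝ] C(X, ℝ)} (hT : Monotone T)
    {H : C(X, ℝ)} {a b α β R : ℝ} (ha : 0 < a) (hH : ∀ x, H x ∈ Icc a b) (hα : 0 ≤ α)
    (hTH : ∀ x, T H x ∈ Icc α β)
    (hR : Tendsto (fun k : ℕ => ‖T ^ k‖ ^ ((1 : ℝ) / k)) atTop (𝓝 R)) :
    α / b ≤ R ∧ R ≤ β / a := by
  obtain ⟨x₀⟩ := ‹Nonempty X›
  have hb : 0 < b := ha.trans_le ((hH x₀).1.trans (hH x₀).2)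
  have hβ : 0 ≤ β := hα.trans ((hTH x₀).1.trans (hTH x₀).2)
  have hc₁ : 0 ≤ α / b := div_nonneg hα hb.le
  have hc₂ : 0 ≤ β / a := div_nonneg hβ ha.le
  have hH0 : 0 ≤ H := fun x => ha.le.trans (hH x).1
  have hHnorm : 0 < ‖H‖ :=
    ha.trans_le ((hH x₀).1.trans ((le_abs_self _).trans (H.norm_coe_le_norm x₀)))
  have hTk : ∀ k, Monotone ⇑(T ^ k) := fun k => by
    rw [FunLike.coe_pow_eq_iterate]; exact hT.iterate k
  have hlow : (α / b) • H ≤ T H := fun x => by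
    calc α / b * H x ≤ α / b * b := by gcongr; exact (hH x).2
      _ = α := by field_simp
      _ ≤ T H x := (hTH x).1
  have hup : T H ≤ (β / a) • H := fun x => by
    calc T H x ≤ β := (hTH x).2
      _ = β / a * a := by field_simp
      _ ≤ β / a * H x := by gcongr; exact (hH x).1
  constructor
  · refine le_of_pow_le_of_tendsto_rpow hc₁ (fun k => ?_) hR
    have hpow := T.smul_le_pow_apply hT hc₁ hlow k
    have : (α / b) ^ k * ‖H‖ ≤ ‖T ^ k‖ * ‖H‖ := by
      calc (α / b) ^ k * ‖H‖ = ‖(α / b) ^ k • H‖ := by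
            rw [norm_smul, Real.norm_of_nonneg (by positivity)]
        _ ≤ ‖(T ^ k) H‖ :=
            ContinuousMap.norm_le_norm_of_nonneg_of_le (smul_nonneg (by positivity) hH0) hpow
        _ ≤ ‖T ^ k‖ * ‖H‖ := (T ^ k).le_opNorm H
    exact le_of_mul_le_mul_right this hHnorm
  · refine le_of_le_pow_mul_of_tendsto_rpow (fun k => norm_nonneg (T ^ k)) hc₂
      (div_pos hHnorm ha) (fun k => ?_) hR
    have hpow := T.pow_apply_le_smul hT hc₂ hup k
    calc ‖T ^ k‖ ≤ ‖(T ^ k) H‖ / a :=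
          ContinuousMap.opNorm_le_norm_apply_div_of_monotone (hTk k) ha fun x => (hH x).1
      _ ≤ ‖(β / a) ^ k • H‖ / a := by
          gcongr
          exact ContinuousMap.norm_le_norm_of_nonneg_of_le (by simpa using hTk k hH0) hpow
      _ = (β / a) ^ k * (‖H‖ / a) := by
          rw [norm_smul, Real.norm_of_nonneg (by positivity), mul_div_assoc]

theorem tsum_mul_mem_Icc_of_hasSum_one {τ g : ℕ → ℝ} {a b : ℝ} (hτ : ∀ j, 0 ≤ τ j)
    (hτ1 : HasSum τ 1) (hg : ∀ j, g j ∈ Icc a b) : ∑' j, τ j * g j ∈ Icc a b := by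
  have hsum : Summable fun j => τ j * g j := by
    refine (hτ1.summable.mul_right (max |a| |b|)).of_norm_bounded fun j => ?_
    rw [norm_mul, Real.norm_of_nonneg (hτ j)]
    exact mul_le_mul_of_nonneg_left (abs_le_max_abs_abs (hg j).1 (hg j).2) (hτ j)
  have hconst : ∀ c : ℝ, ∑' j, τ j * c = c := fun c => by
    rw [tsum_mul_right, hτ1.tsum_eq, one_mul]
  constructor
  · calc a = ∑' j, τ j * a := (hconst a).symm
      _ ≤ ∑' j, τ j * g j := (hτ1.summable.mul_right a).tsum_le_tsum
          (fun j => mul_le_mul_of_nonneg_left (hg j).1 (hτ j)) hsum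
  · calc ∑' j, τ j * g j ≤ ∑' j, τ j * b := hsum.tsum_le_tsum
          (fun j => mul_le_mul_of_nonneg_left (hg j).2 (hτ j)) (hτ1.summable.mul_right b)
      _ = b := hconst b

section MemoryOperator

variable {S : Type*} [Fintype S] [TopologicalSpace S] {m : S → S → ℝ}
  {τ : ℕ → ℝ} {T : C(ℕ → S, ℝ) →L[ℝ] C(ℕ → S, ℝ)}

theorem monotone_memoryOperator (hm : ∀ s t, 0 ≤ m s t) (hτ : ∀ j, 0 ≤ τ j)
    (hT : ∀ (f : C(ℕ → S, ℝ)) (x : ℕ → S),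
      T f x = ∑' j : ℕ, τ j * ∑ t : S, m (x j) t * f (memCons t x)) :
    Monotone T := fun f g hfg => by
  rw [← sub_nonneg, ← map_sub, ContinuousMap.le_def]
  intro x
  rw [ContinuousMap.zero_apply, hT]
  exact tsum_nonneg fun j => mul_nonneg (hτ j) (Finset.sum_nonneg fun t _ =>
    mul_nonneg (hm _ _) (sub_nonneg.2 (hfg _)))

theorem memoryOperator_apply_of_eigenvector
    (hT : ∀ (f : C(ℕ → S, ℝ)) (x : ℕ → S),
      T f x = ∑' j : ℕ, τ j * ∑ t : S, m (x j) t * f (memCons t x))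
    {r : ℝ} {h : S → ℝ} (hh : ∀ s, ∑ t : S, m s t * h t = r * h s)
    {H : C(ℕ → S, ℝ)} (hH : ∀ x, H x = h (x 0)) (x : ℕ → S) :
    T H x = ∑' j : ℕ, τ j * (r * h (x j)) := by
  simp only [hT, hH, ← hh]
  rfl

end MemoryOperator

theorem harnack_bounds_spectral_radius_general
    {S : Type*} [Fintype S] [Nonempty S]
    [TopologicalSpace S] [DiscreteTopology S]
    (m : S → S → ℝ)
    (hm_nonneg : ∀ s t, 0 ≤ m s t)
    (τ : ℕ → ℝ)
    (hτ_nonneg : ∀ j, 0 ≤ τ j) (hτ_sum : HasSum τ 1)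
    (T : C(ℕ → S, ℝ) →L[ℝ] C(ℕ → S, ℝ))
    (hT : ∀ (f : C(ℕ → S, ℝ)) (x : ℕ → S),
      T f x = ∑' j : ℕ, τ j * ∑ t : S, m (x j) t * f (memCons t x))
    (R r : ℝ)
    (hR : Tendsto (fun k : ℕ => ‖T ^ k‖ ^ ((1 : ℝ) / k)) atTop (𝓝 R))
    (hr_pos : 0 < r)
    (h : S → ℝ) (hh_pos : ∀ s, 0 < h s)
    (hh_eig : ∀ s, ∑ t : S, m s t * h t = r * h s) :
    r * (Finset.univ.inf' Finset.univ_nonempty h) / (Finset.univ.sup' Finset.univ_nonempty h)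
      ≤ R ∧
    R ≤ r * (Finset.univ.sup' Finset.univ_nonempty h) /
      (Finset.univ.inf' Finset.univ_nonempty h) := by
  set a := Finset.univ.inf' Finset.univ_nonempty h
  set b := Finset.univ.sup' Finset.univ_nonempty h
  have ha : 0 < a := (Finset.lt_inf'_iff _).2 fun s _ => hh_pos s
  have hab : ∀ s, h s ∈ Icc a b := fun s =>
    ⟨Finset.inf'_le h (Finset.mem_univ s), Finset.le_sup' h (Finset.mem_univ s)⟩
  let H : C(ℕ → S, ℝ) := ⟨fun x => h (x 0), by fun_prop⟩
  refine ContinuousMap.harnack_bounds_of_monotone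
    (monotone_memoryOperator hm_nonneg hτ_nonneg hT) ha (H := H) (fun x => hab (x 0))
    (by positivity) (fun x => ?_) hR
  rw [memoryOperator_apply_of_eigenvector hT hh_eig (fun _ => rfl)]
  exact tsum_mul_mem_Icc_of_hasSum_one hτ_nonneg hτ_sum fun j =>
    ⟨by gcongr; exact (hab _).1, by gcongr; exact (hab _).2⟩

/-- **Harnack-type bounds for the spectral radii (equation (3.4)).** If `h : S → ℝ` is a
strictly positive right eigenfunction of `m` for the spectral radius `r > 0`, then
`r · (min h)/(max h) ≤ R ≤ r · (max h)/(min h)`, where `R` is the spectral radius of the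
memory operator. -/
theorem harnack_bounds_spectral_radius
    {S : Type*} [Fintype S] [Nonempty S] [DecidableEq S]
    [TopologicalSpace S] [DiscreteTopology S]
    (m : S → S → ℝ)
    (hm_nonneg : ∀ s t, 0 ≤ m s t)
    (hm_prim : ∃ k : ℕ, 1 ≤ k ∧ ∀ s t, 0 < ((Matrix.of m) ^ k) s t)
    (τ : ℕ → ℝ)
    (hτ_nonneg : ∀ j, 0 ≤ τ j) (hτ_sum : HasSum τ 1)
    (hτ_zero : 0 < τ 0)
    (hτ_mean : Summable fun j : ℕ => (j : ℝ) * τ j)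
    (T : C(ℕ → S, ℝ) →L[ℝ] C(ℕ → S, ℝ))
    (hT : ∀ (f : C(ℕ → S, ℝ)) (x : ℕ → S),
      T f x = ∑' j : ℕ, τ j * ∑ t : S, m (x j) t * f (memCons t x))
    (M : (S → ℝ) →L[ℝ] (S → ℝ))
    (hM : ∀ (v : S → ℝ) (s : S), M v s = ∑ t : S, m s t * v t)
    (R r : ℝ)
    (hR : Tendsto (fun k : ℕ => ‖T ^ k‖ ^ ((1 : ℝ) / k)) atTop (𝓝 R))
    (hr : Tendsto (fun k : ℕ => ‖M ^ k‖ ^ ((1 : ℝ) / k)) atTop (𝓝 r))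
    (hr_pos : 0 < r)
    (h : S → ℝ) (hh_pos : ∀ s, 0 < h s)
    (hh_eig : ∀ s, ∑ t : S, m s t * h t = r * h s) :
    r * (Finset.univ.inf' Finset.univ_nonempty h) / (Finset.univ.sup' Finset.univ_nonempty h)
      ≤ R ∧
    R ≤ r * (Finset.univ.sup' Finset.univ_nonempty h) /
      (Finset.univ.inf' Finset.univ_nonempty h) :=
  harnack_bounds_spectral_radius_general m hm_nonneg τ hτ_nonneg hτ_sum T hT R r hR hr_pos h hh_pos
    hh_eig
end

section
/- Lemma 3.3, first part (one-dimensional marginals of the invariant law): Let σ̄ be a Q̄-invariant Borel probability measure on S × 𝒮. Then for every t ∈ S and every j ≥ 0, σ̄({(s, 𝐬) ∈ S × 𝒮 : s = t}) = σ̄({(s, 𝐬) ∈ S × 𝒮 : s_j = t}) = ρ(t)·h(t). -/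
open MeasureTheory ProbabilityTheory

/-!
Write `ν_j` for the law of the memory entry `s_j` under `σ̄`. Testing the invariance of `σ̄` on
one-coordinate events gives three identities. Since `Q̄` pushes the old memory one step back,
`ν_{j+1} = ν_j`, so all `ν_j` equal `ν_0`. The new present state is the old `s_j` with probability
`τ(j)`, so its law is `∑ τ(j) ν_j = ν_0`. The new entry `s_0` is an `m̄`-step from the old `s_j`,
so `ν_0 = ∑ τ(j) ν_j m̄ = ν_0 m̄`. Finally `m̄` has row sums one and `m̄^k` is a positive
multiple of `m^k` entrywise (conjugation by `diag h`), so its stationary probability vector is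
unique; `ρ h` is one.
-/

open Matrix

theorem Finset.abs_sum_lt_sum_abs {ι : Type*} {s : Finset ι} {x : ι → ℝ} {a b : ι}
    (ha : a ∈ s) (hb : b ∈ s) (hxa : 0 < x a) (hxb : x b < 0) :
    |∑ i ∈ s, x i| < ∑ i ∈ s, |x i| := by
  rw [abs_lt, ← Finset.sum_neg_distrib]
  exact ⟨Finset.sum_lt_sum (fun i _ => neg_abs_le (x i)) ⟨a, ha, by rw [abs_of_pos hxa]; linarith⟩,
    Finset.sum_lt_sum (fun i _ => le_abs_self (x i)) ⟨b, hb, by rw [abs_of_neg hxb]; linarith⟩⟩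

namespace Matrix

variable {n : Type*} [Fintype n]

theorem sum_row_eq_one_of_mulVec_one {m R : Type*} [NonAssocSemiring R]
    {M : Matrix m n R} (hM : M *ᵥ 1 = 1) (i : m) : ∑ j, M i j = 1 := by
  simpa [mulVec, dotProduct] using congrFun hM i

theorem vecMul_pow_eq_self [DecidableEq n] {R : Type*} [Semiring R] {M : Matrix n n R}
    {v : n → R} (hv : v ᵥ* M = v) : ∀ k : ℕ, v ᵥ* M ^ k = v
  | 0 => by simp
  | k + 1 => by rw [pow_succ, ← vecMul_vecMul, vecMul_pow_eq_self hv k, hv]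

theorem pow_mulVec_eq_self [DecidableEq n] {R : Type*} [Semiring R] {M : Matrix n n R}
    {v : n → R} (hv : M *ᵥ v = v) : ∀ k : ℕ, M ^ k *ᵥ v = v
  | 0 => by simp
  | k + 1 => by rw [pow_succ', ← mulVec_mulVec, pow_mulVec_eq_self hv k, hv]

/-- A nonzero `d` of total mass zero has entries of both signs, so `∑ |d ᵥ* M| < ∑ |d|`. -/
theorem eq_zero_of_vecMul_eq_self_of_pos {M : Matrix n n ℝ} (hM : M *ᵥ 1 = 1)
    (hpos : ∀ i j, 0 < M i j) {d : n → ℝ} (hd : d ᵥ* M = d) (hsum : ∑ i, d i = 0) :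
    d = 0 := by
  by_contra hne
  obtain ⟨i₀, hi₀⟩ := Function.ne_iff.mp hne
  obtain ⟨a, -, ha⟩ := Finset.exists_pos_of_sum_zero_of_exists_nonzero d hsum
    ⟨i₀, Finset.mem_univ _, hi₀⟩
  obtain ⟨b, -, hb⟩ := Finset.exists_pos_of_sum_zero_of_exists_nonzero (-d)
    (by simp [hsum]) ⟨i₀, Finset.mem_univ _, by simpa using hi₀⟩
  have hstrict : ∀ j, |d j| < ∑ i, |d i| * M i j := fun j => by
    have hdj : d j = ∑ i, d i * M i j := by
      simpa [vecMul, dotProduct] using (congrFun hd j).symm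
    have hb' : d b * M b j < 0 := mul_neg_of_neg_of_pos (by simpa using hb) (hpos b j)
    rw [hdj]
    simpa [abs_mul, abs_of_pos (hpos _ j)] using
      Finset.abs_sum_lt_sum_abs (x := fun i => d i * M i j) (Finset.mem_univ a)
        (Finset.mem_univ b) (mul_pos ha (hpos a j)) hb'
  have hcontra : ∑ j, |d j| < ∑ i, |d i| := calc
    ∑ j, |d j| < ∑ j, ∑ i, |d i| * M i j :=
      Finset.sum_lt_sum_of_nonempty ⟨i₀, Finset.mem_univ _⟩ fun j _ => hstrict j
    _ = ∑ i, |d i| := by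
      rw [Finset.sum_comm]
      simp_rw [← Finset.mul_sum, sum_row_eq_one_of_mulVec_one hM, mul_one]
  exact hcontra.false

theorem eq_of_vecMul_eq_self_of_pow_pos [DecidableEq n] {M : Matrix n n ℝ} (hM : M *ᵥ 1 = 1)
    {k : ℕ} (hpos : ∀ i j, 0 < (M ^ k) i j) {ν μ : n → ℝ} (hν : ν ᵥ* M = ν) (hμ : μ ᵥ* M = μ)
    (hsum : ∑ i, ν i = ∑ i, μ i) : ν = μ :=
  sub_eq_zero.mp <| eq_zero_of_vecMul_eq_self_of_pos (pow_mulVec_eq_self hM k) hpos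
    (vecMul_pow_eq_self (by rw [sub_vecMul, hν, hμ]) k)
    (by simp [Finset.sum_sub_distrib, hsum])

end Matrix

section HTransform

variable {S : Type*} [Fintype S]

/-- The matrix `m̄` of the paper: Doob's `h`-transform of `m / r`. -/
noncomputable def hTransform (m : S → S → ℝ) (r : ℝ) (h : S → ℝ) : Matrix S S ℝ :=
  Matrix.of fun s t => m s t * h t / (r * h s)

variable {m : S → S → ℝ} {r : ℝ} {h : S → ℝ}

theorem hTransform_mulVec_one (hr : r ≠ 0) (hh : ∀ s, h s ≠ 0)
    (hh_eig : ∀ s, ∑ t, m s t * h t = r * h s) : hTransform m r h *ᵥ 1 = 1 := by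
  ext s
  simp only [hTransform, mulVec, dotProduct, of_apply, Pi.one_apply, mul_one,
    ← Finset.sum_div, hh_eig, div_self (mul_ne_zero hr (hh s))]

theorem vecMul_hTransform (hr : r ≠ 0) (hh : ∀ s, h s ≠ 0) {ρ : S → ℝ}
    (hρ_eig : ∀ t, ∑ s, ρ s * m s t = r * ρ t) : (ρ * h) ᵥ* hTransform m r h = ρ * h := by
  ext t
  have hterm : ∀ s, ρ s * h s * (m s t * h t / (r * h s)) = ρ s * m s t * (h t / r) := fun s => by
    field_simp [hh s]
  simp only [hTransform, vecMul, dotProduct, of_apply, Pi.mul_apply, hterm,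
    ← Finset.sum_mul, hρ_eig]
  field_simp

theorem hTransform_pow_apply [DecidableEq S] (hh : ∀ s, h s ≠ 0) (k : ℕ) (s t : S) :
    (hTransform m r h ^ k) s t = (Matrix.of m ^ k) s t * h t / (r ^ k * h s) := by
  induction k generalizing t with
  | zero => by_cases hst : s = t <;> simp [hst, hh]
  | succ k ih =>
    simp only [pow_succ, mul_apply, ih, Finset.sum_div, Finset.sum_mul]
    refine Finset.sum_congr rfl fun u _ => ?_
    simp only [hTransform, of_apply]
    field_simp [hh u]

end HTransform

theorem measurable_memCons {S : Type*} [MeasurableSpace S] (t : S) :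
    Measurable (memCons t) :=
  measurable_pi_lambda _ fun n => by
    cases n <;> [exact measurable_const; exact measurable_pi_apply _]

theorem measureReal_eq_integral_of_bind_eq {X : Type*} [MeasurableSpace X] {κ : Kernel X X}
    [IsFiniteKernel κ] {μ : Measure X} (hμ : μ.bind κ = μ) {A : Set X} (hA : MeasurableSet A) :
    μ.real A = ∫ x, (κ x).real A ∂μ := by
  simp only [measureReal_def]
  rw [integral_toReal (κ.measurable_coe hA).aemeasurable (ae_of_all _ fun x => measure_lt_top _ _),
    ← Measure.bind_apply hA κ.measurable.aemeasurable, hμ]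

theorem integral_tsum_mul_of_abs_le {X : Type*} [MeasurableSpace X] {μ : Measure X}
    [IsFiniteMeasure μ] {τ : ℕ → ℝ} (hτ : Summable τ) {f : ℕ → X → ℝ}
    (hf : ∀ j, AEStronglyMeasurable (f j) μ) {C : ℝ} (hC : ∀ j x, |f j x| ≤ C) :
    ∫ x, ∑' j, τ j * f j x ∂μ = ∑' j, τ j * ∫ x, f j x ∂μ := by
  have hbound : ∀ j, ∀ x, ‖τ j * f j x‖ ≤ |τ j| * C := fun j x => by
    rw [Real.norm_eq_abs, abs_mul]
    exact mul_le_mul_of_nonneg_left (hC j x) (abs_nonneg _)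
  have hint : ∀ j, Integrable (fun x => τ j * f j x) μ := fun j =>
    .of_bound ((hf j).const_mul (τ j)) _ (ae_of_all _ (hbound j))
  have hsum : Summable fun j => ∫ x, ‖τ j * f j x‖ ∂μ := by
    refine (hτ.abs.mul_right (C * μ.real Set.univ)).of_nonneg_of_le
      (fun j => integral_nonneg fun x => norm_nonneg _) fun j => ?_
    calc ∫ x, ‖τ j * f j x‖ ∂μ ≤ ‖∫ x, ‖τ j * f j x‖ ∂μ‖ := Real.le_norm_self _
      _ ≤ |τ j| * C * μ.real Set.univ :=
        norm_integral_le_of_norm_le_const (ae_of_all _ fun x => by simpa using hbound j x)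
      _ = |τ j| * (C * μ.real Set.univ) := mul_assoc _ _ _
  rw [← integral_tsum_of_summable_integral_norm hint hsum]
  simp only [integral_const_mul]

theorem integral_comp_of_fintype {X S : Type*} [MeasurableSpace X] [Fintype S]
    [MeasurableSpace S] [MeasurableSingletonClass S] {μ : Measure X} [IsFiniteMeasure μ] {φ : X → S}
    (hφ : Measurable φ) (g : S → ℝ) :
    ∫ x, g (φ x) ∂μ = ∑ s, g s * μ.real {x | φ x = s} := by
  rw [← integral_map hφ.aemeasurable (measurable_of_finite g).aestronglyMeasurable,
    integral_fintype .of_finite]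
  simp [map_measureReal_apply hφ (measurableSet_singleton _), mul_comm]
  rfl

theorem sum_measureReal_fiber_eq_one {X S : Type*} [MeasurableSpace X] [Fintype S]
    [MeasurableSpace S] [MeasurableSingletonClass S] {μ : Measure X} [IsProbabilityMeasure μ]
    {φ : X → S} (hφ : Measurable φ) : ∑ s, μ.real {x | φ x = s} = 1 := by
  simpa using (integral_comp_of_fintype (μ := μ) hφ fun _ => 1).symm

theorem measurable_coord {S : Type*} [MeasurableSpace S] (j : ℕ) :
    Measurable fun p : S × (ℕ → S) => p.2 j := by
  fun_prop

theorem measurableSet_coord_eq {S : Type*} [MeasurableSpace S] [MeasurableSingletonClass S]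
    (j : ℕ) (u : S) : MeasurableSet {p : S × (ℕ → S) | p.2 j = u} :=
  measurable_coord j (measurableSet_singleton u)

section InvariantLaw

variable {S : Type*} [Fintype S] [MeasurableSpace S] [MeasurableSingletonClass S]

/-- `Q̄` of the paper is the case `P = hTransform m r h`. -/
def IsMemoryKernel (Q : Kernel (S × (ℕ → S)) (S × (ℕ → S))) (τ : ℕ → ℝ) (P : Matrix S S ℝ) :
    Prop :=
  ∀ p A, MeasurableSet A → (Q p A).toReal =
    ∑' j, τ j * ∑ t, P (p.2 j) t * A.indicator 1 (p.2 j, memCons t p.2)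

variable {τ : ℕ → ℝ} {P : Matrix S S ℝ} {Q : Kernel (S × (ℕ → S)) (S × (ℕ → S))}
  [IsFiniteKernel Q] {σ : Measure (S × (ℕ → S))} [IsFiniteMeasure σ]

namespace IsMemoryKernel

theorem measureReal_eq (hQ : IsMemoryKernel Q τ P) (hσ : σ.bind Q = σ) (hτ : Summable τ)
    {A : Set (S × (ℕ → S))} (hA : MeasurableSet A) :
    σ.real A = ∑' j, τ j * ∫ p, ∑ t, P (p.2 j) t * A.indicator 1 (p.2 j, memCons t p.2) ∂σ := by
  rw [measureReal_eq_integral_of_bind_eq hσ hA]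
  simp only [measureReal_def, hQ _ A hA]
  refine integral_tsum_mul_of_abs_le hτ (fun j => ?_) (C := ∑ s, ∑ t, |P s t|) fun j p => ?_
  · have hcoord := measurable_coord (S := S) j
    refine Measurable.aestronglyMeasurable (Finset.measurable_sum _ fun t _ => ?_)
    exact ((measurable_of_finite fun s => P s t).comp hcoord).mul
      ((measurable_const.indicator hA).comp
        (hcoord.prodMk ((measurable_memCons t).comp measurable_snd)))
  · calc |∑ t, P (p.2 j) t * A.indicator 1 (p.2 j, memCons t p.2)|
        ≤ ∑ t, |P (p.2 j) t| := by
          refine (Finset.abs_sum_le_sum_abs _ _).trans (Finset.sum_le_sum fun t _ => ?_)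
          rw [abs_mul]
          refine mul_le_of_le_one_right (abs_nonneg _) ?_
          by_cases hmem : (p.2 j, memCons t p.2) ∈ A <;> simp [hmem]
      _ ≤ ∑ s, ∑ t, |P s t| :=
          Finset.single_le_sum (f := fun s => ∑ t, |P s t|)
            (fun s _ => Finset.sum_nonneg fun t _ => abs_nonneg _) (Finset.mem_univ _)

theorem measureReal_coord_succ (hQ : IsMemoryKernel Q τ P) (hσ : σ.bind Q = σ)
    (hτ : HasSum τ 1) (hP : P *ᵥ 1 = 1) (n : ℕ) (u : S) :
    σ.real {p | p.2 (n + 1) = u} = σ.real {p | p.2 n = u} := by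
  have hintegrand : ∀ j p, ∑ t, P (p.2 j) t * {q : S × (ℕ → S) | q.2 (n + 1) = u}.indicator 1
      (p.2 j, memCons t p.2) = {q : S × (ℕ → S) | q.2 n = u}.indicator 1 p := fun j p => by
    change ∑ t, P (p.2 j) t * {q : S × (ℕ → S) | q.2 n = u}.indicator 1 p = _
    rw [← Finset.sum_mul, P.sum_row_eq_one_of_mulVec_one hP, one_mul]
  simp only [hQ.measureReal_eq hσ hτ.summable (measurableSet_coord_eq _ u), hintegrand,
    integral_indicator_one (measurableSet_coord_eq n u), tsum_mul_right, hτ.tsum_eq, one_mul]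

theorem measureReal_coord_eq_zero (hQ : IsMemoryKernel Q τ P) (hσ : σ.bind Q = σ)
    (hτ : HasSum τ 1) (hP : P *ᵥ 1 = 1) (j : ℕ) (u : S) :
    σ.real {p | p.2 j = u} = σ.real {p | p.2 0 = u} := by
  induction j with
  | zero => rfl
  | succ n ih => rw [hQ.measureReal_coord_succ hσ hτ hP, ih]

theorem measureReal_fst_eq (hQ : IsMemoryKernel Q τ P) (hσ : σ.bind Q = σ) (hτ : HasSum τ 1)
    (hP : P *ᵥ 1 = 1) (u : S) :
    σ.real {p | p.1 = u} = σ.real {p | p.2 0 = u} := by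
  have hintegrand : ∀ j p, ∑ t, P (p.2 j) t * {q : S × (ℕ → S) | q.1 = u}.indicator 1
      (p.2 j, memCons t p.2) = {q : S × (ℕ → S) | q.2 j = u}.indicator 1 p := fun j p => by
    change ∑ t, P (p.2 j) t * {q : S × (ℕ → S) | q.2 j = u}.indicator 1 p = _
    rw [← Finset.sum_mul, P.sum_row_eq_one_of_mulVec_one hP, one_mul]
  have hA : MeasurableSet {p : S × (ℕ → S) | p.1 = u} :=
    measurable_fst (measurableSet_singleton u)
  simp only [hQ.measureReal_eq hσ hτ.summable hA, hintegrand,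
    integral_indicator_one (measurableSet_coord_eq _ u), hQ.measureReal_coord_eq_zero hσ hτ hP,
    tsum_mul_right, hτ.tsum_eq, one_mul]

theorem vecMul_coord_zero (hQ : IsMemoryKernel Q τ P) (hσ : σ.bind Q = σ)
    (hτ : HasSum τ 1) (hP : P *ᵥ 1 = 1) :
    (fun u => σ.real {p | p.2 0 = u}) ᵥ* P = fun u => σ.real {p | p.2 0 = u} := by
  ext u
  have hintegrand : ∀ (j : ℕ) (p : S × (ℕ → S)), ∑ t, P (p.2 j) t *
      {q : S × (ℕ → S) | q.2 0 = u}.indicator 1 (p.2 j, memCons t p.2) = P (p.2 j) u :=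
    fun j p => by
      have hmem : (p.2 j, memCons u p.2) ∈ {q : S × (ℕ → S) | q.2 0 = u} := rfl
      rw [Finset.sum_eq_single u (fun t _ ht => by simp [memCons, ht]) (by simp),
        Set.indicator_of_mem hmem, Pi.one_apply, mul_one]
  rw [hQ.measureReal_eq hσ hτ.summable (measurableSet_coord_eq 0 u)]
  simp only [hintegrand, integral_comp_of_fintype (measurable_coord _) (fun s => P s u),
    hQ.measureReal_coord_eq_zero hσ hτ hP, tsum_mul_right, hτ.tsum_eq, one_mul]
  simp [vecMul, dotProduct, mul_comm]

end IsMemoryKernel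

end InvariantLaw

theorem invariant_law_one_dim_marginals_general
    {S : Type*} [Fintype S] [DecidableEq S]
    [TopologicalSpace S] [DiscreteTopology S]
    [MeasurableSpace S] [BorelSpace S]
    (m : S → S → ℝ)
    (hm_prim : ∃ k : ℕ, 1 ≤ k ∧ ∀ s t, 0 < ((Matrix.of m) ^ k) s t)
    (τ : ℕ → ℝ)
    (hτ_sum : HasSum τ 1)
    -- Perron–Frobenius data for `m`
    (r : ℝ) (hr_pos : 0 < r)
    (h : S → ℝ) (hh_pos : ∀ s, 0 < h s)
    (hh_eig : ∀ s, ∑ t : S, m s t * h t = r * h s)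
    (ρ : S → ℝ)
    (hρ_eig : ∀ t, ∑ s : S, ρ s * m s t = r * ρ t)
    (hρh : ∑ s : S, ρ s * h s = 1)
    -- the biased kernel `Q̄`
    (Q : Kernel (S × (ℕ → S)) (S × (ℕ → S))) [IsMarkovKernel Q]
    (hQ : ∀ (p : S × (ℕ → S)) (A : Set (S × (ℕ → S))), MeasurableSet A →
      (Q p A).toReal = ∑' j : ℕ, τ j * ∑ t : S,
        (m (p.2 j) t * h t / (r * h (p.2 j))) *
          A.indicator (fun _ => (1 : ℝ)) (p.2 j, memCons t p.2))
    -- an invariant probability measure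
    (σ : Measure (S × (ℕ → S))) (hσ_prob : IsProbabilityMeasure σ)
    (hσ_inv : σ.bind (fun p => Q p) = σ) :
    ∀ (t : S) (j : ℕ),
      (σ {p : S × (ℕ → S) | p.1 = t}).toReal = ρ t * h t ∧
      (σ {p : S × (ℕ → S) | p.2 j = t}).toReal = ρ t * h t := by
  have hr : r ≠ 0 := hr_pos.ne'
  have hh : ∀ s, h s ≠ 0 := fun s => (hh_pos s).ne'
  have hQ' : IsMemoryKernel Q τ (hTransform m r h) := hQ
  have hP := hTransform_mulVec_one hr hh hh_eig
  obtain ⟨k, -, hk⟩ := hm_prim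
  have hpos : ∀ s t, 0 < (hTransform m r h ^ k) s t := fun s t => by
    rw [hTransform_pow_apply hh]
    exact div_pos (mul_pos (hk s t) (hh_pos t)) (mul_pos (pow_pos hr_pos k) (hh_pos s))
  have hmass : ∑ u, σ.real {p | p.2 0 = u} = ∑ u, (ρ * h) u := by
    rw [sum_measureReal_fiber_eq_one (measurable_coord 0)]
    simpa using hρh.symm
  have hν : (fun u => σ.real {p | p.2 0 = u}) = ρ * h :=
    eq_of_vecMul_eq_self_of_pow_pos hP hpos (hQ'.vecMul_coord_zero hσ_inv hτ_sum hP)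
      (vecMul_hTransform hr hh hρ_eig) hmass
  intro t j
  rw [← measureReal_def, ← measureReal_def, hQ'.measureReal_fst_eq hσ_inv hτ_sum hP,
    hQ'.measureReal_coord_eq_zero hσ_inv hτ_sum hP j]
  exact ⟨congrFun hν t, congrFun hν t⟩

/-- **Lemma 3.3, first part (one-dimensional marginals of the invariant law).**
If `σ̄` is a probability measure on `S × 𝒮` invariant for the biased kernel `Q̄`, then
for every `t ∈ S` and `j ≥ 0`,
`σ̄{(s,x) : s = t} = σ̄{(s,x) : x_j = t} = ρ(t)·h(t)`. -/
theorem invariant_law_one_dim_marginals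
    {S : Type*} [Fintype S] [Nonempty S] [DecidableEq S]
    [TopologicalSpace S] [DiscreteTopology S]
    [MeasurableSpace S] [BorelSpace S]
    (m : S → S → ℝ)
    (hm_nonneg : ∀ s t, 0 ≤ m s t)
    (hm_prim : ∃ k : ℕ, 1 ≤ k ∧ ∀ s t, 0 < ((Matrix.of m) ^ k) s t)
    (τ : ℕ → ℝ)
    (hτ_nonneg : ∀ j, 0 ≤ τ j) (hτ_sum : HasSum τ 1)
    (hτ_zero : 0 < τ 0)
    (hτ_mean : Summable fun j : ℕ => (j : ℝ) * τ j)
    -- Perron–Frobenius data for `m`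
    (r : ℝ) (hr_pos : 0 < r)
    (h : S → ℝ) (hh_pos : ∀ s, 0 < h s)
    (hh_eig : ∀ s, ∑ t : S, m s t * h t = r * h s)
    (ρ : S → ℝ) (hρ_nonneg : ∀ s, 0 ≤ ρ s) (hρ_sum : ∑ s : S, ρ s = 1)
    (hρ_eig : ∀ t, ∑ s : S, ρ s * m s t = r * ρ t)
    (hρh : ∑ s : S, ρ s * h s = 1)
    -- the biased kernel `Q̄`
    (Q : Kernel (S × (ℕ → S)) (S × (ℕ → S))) [IsMarkovKernel Q]
    (hQ : ∀ (p : S × (ℕ → S)) (A : Set (S × (ℕ → S))), MeasurableSet A →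
      (Q p A).toReal = ∑' j : ℕ, τ j * ∑ t : S,
        (m (p.2 j) t * h t / (r * h (p.2 j))) *
          A.indicator (fun _ => (1 : ℝ)) (p.2 j, memCons t p.2))
    -- an invariant probability measure
    (σ : Measure (S × (ℕ → S))) (hσ_prob : IsProbabilityMeasure σ)
    (hσ_inv : σ.bind (fun p => Q p) = σ) :
    ∀ (t : S) (j : ℕ),
      (σ {p : S × (ℕ → S) | p.1 = t}).toReal = ρ t * h t ∧
      (σ {p : S × (ℕ → S) | p.2 j = t}).toReal = ρ t * h t :=
  invariant_law_one_dim_marginals_general m hm_prim τ hτ_sum r hr_pos h hh_pos hh_eig ρ hρ_eig hρh Q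
    hQ σ hσ_prob hσ_inv
end

section
/- Lemma 3.3, second part (two-dimensional marginal of the invariant law): Let σ̄ be a Q̄-invariant Borel probability measure on S × 𝒮. Then for all t, u ∈ S, σ̄({(s, 𝐬) ∈ S × 𝒮 : s = t and s_0 = u}) = ρ(t)·m(t,u)·h(u)/r. -/
open MeasureTheory ProbabilityTheory

section Aux


variable {S : Type*} [Fintype S] [DecidableEq S]

/-- Left fixed vectors of `P` are fixed by all powers of `P`. -/
lemma vecMul_pow_fixed (P : S → S → ℝ) (f : S → ℝ)
    (hf : ∀ t, ∑ s : S, f s * P s t = f t) :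
    ∀ (k : ℕ) (t : S), ∑ s : S, f s * ((Matrix.of P) ^ k) s t = f t := by
  intro k
  induction k with
  | zero =>
    intro t
    simp [Matrix.one_apply, mul_ite, Finset.sum_ite_eq]
  | succ n ih =>
    intro t
    rw [pow_succ]
    simp only [Matrix.mul_apply]
    calc ∑ s : S, f s * ∑ u : S, ((Matrix.of P) ^ n) s u * (Matrix.of P) u t
        = ∑ u : S, (∑ s : S, f s * ((Matrix.of P) ^ n) s u) * P u t := by
          simp_rw [Finset.mul_sum, Finset.sum_mul]
          rw [Finset.sum_comm]
          simp [Matrix.of_apply, mul_assoc]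
      _ = f t := by simp_rw [ih]; exact hf t

/-- Uniqueness of a stationary probability vector when some power of `P` is positive. -/
lemma stationary_unique [Nonempty S] (P : S → S → ℝ) (k : ℕ)
    (hPk : ∀ s t : S, 0 < ((Matrix.of P) ^ k) s t)
    (f g : S → ℝ) (hf0 : ∀ s, 0 ≤ f s) (hg0 : ∀ s, 0 < g s)
    (hfs : ∑ s : S, f s = 1) (hgs : ∑ s : S, g s = 1)
    (hf : ∀ t, ∑ s : S, f s * P s t = f t) (hg : ∀ t, ∑ s : S, g s * P s t = g t) :
    f = g := by
  obtain ⟨t0, -, ht0⟩ := Finset.exists_min_image Finset.univ (fun t => f t / g t)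
    ⟨Classical.arbitrary S, Finset.mem_univ _⟩
  set c : ℝ := f t0 / g t0 with hc
  have hcle : ∀ s, c * g s ≤ f s := by
    intro s
    have := ht0 s (Finset.mem_univ s)
    rw [div_le_div_iff₀ (hg0 t0) (hg0 s)] at this
    rw [hc, div_mul_eq_mul_div, div_le_iff₀ (hg0 t0)]
    linarith
  set d : S → ℝ := fun s => f s - c * g s with hd
  have hd0 : ∀ s, 0 ≤ d s := fun s => sub_nonneg.2 (hcle s)
  have hdt0 : d t0 = 0 := by
    have : c * g t0 = f t0 := by
      rw [hc, div_mul_cancel₀ _ (hg0 t0).ne']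
    simp [hd, this]
  have hdfix : ∀ t, ∑ s : S, d s * ((Matrix.of P) ^ k) s t = d t := by
    intro t
    have h1 := vecMul_pow_fixed P f hf k t
    have h2 := vecMul_pow_fixed P g hg k t
    simp only [hd, sub_mul, Finset.sum_sub_distrib, mul_assoc]
    rw [h1, ← Finset.mul_sum, h2]
  have hdzero : ∀ s, d s = 0 := by
    have hsum : ∑ s : S, d s * ((Matrix.of P) ^ k) s t0 = 0 := by rw [hdfix, hdt0]
    intro s
    have hterm : ∀ x ∈ Finset.univ, 0 ≤ d x * ((Matrix.of P) ^ k) x t0 :=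
      fun x _ => mul_nonneg (hd0 x) (hPk x t0).le
    have := (Finset.sum_eq_zero_iff_of_nonneg hterm).1 hsum s (Finset.mem_univ s)
    exact (mul_eq_zero.1 this).resolve_right (ne_of_gt (hPk s t0))
  have hfg : ∀ s, f s = c * g s := by
    intro s; have := hdzero s; simp [hd] at this; linarith
  have hc1 : c = 1 := by
    have hh : ∑ s : S, f s = c * ∑ s : S, g s := by
      rw [Finset.mul_sum]
      exact Finset.sum_congr rfl fun s _ => hfg s
    rw [hfs, hgs, mul_one] at hh
    exact hh.symm
  funext s
  rw [hfg s, hc1, one_mul]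

/-- Entrywise formula for powers of the similarity-rescaled matrix. -/
lemma barpow (m : S → S → ℝ) (r : ℝ) (h : S → ℝ) (hr : 0 < r) (hh : ∀ s, 0 < h s) :
    ∀ (k : ℕ) (s t : S),
      ((Matrix.of (fun s t => m s t * h t / (r * h s))) ^ k) s t
        = ((Matrix.of m) ^ k) s t * h t / (r ^ k * h s) := by
  intro k
  induction k with
  | zero =>
    intro s t
    by_cases hst : s = t <;> simp [Matrix.one_apply, hst, (hh t).ne']
  | succ n ih =>
    intro s t
    rw [pow_succ, pow_succ]
    simp only [Matrix.mul_apply, Matrix.of_apply, ih]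
    rw [Finset.sum_mul, Finset.sum_div]
    refine Finset.sum_congr rfl fun u _ => ?_
    have h1 : h u ≠ 0 := (hh u).ne'
    have h2 : h s ≠ 0 := (hh s).ne'
    have h3 : r ≠ 0 := hr.ne'
    field_simp
    ring

/-- Left eigenvector relation for powers. -/
lemma left_eig_pow (m : S → S → ℝ) (r : ℝ) (ρ : S → ℝ)
    (hρ_eig : ∀ t, ∑ s : S, ρ s * m s t = r * ρ t) :
    ∀ (k : ℕ) (t : S), ∑ s : S, ρ s * ((Matrix.of m) ^ k) s t = r ^ k * ρ t := by
  intro k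
  induction k with
  | zero => intro t; simp [Matrix.one_apply, mul_ite, Finset.sum_ite_eq]
  | succ n ih =>
    intro t
    rw [pow_succ]
    simp only [Matrix.mul_apply]
    calc ∑ s : S, ρ s * ∑ u : S, ((Matrix.of m) ^ n) s u * (Matrix.of m) u t
        = ∑ u : S, (∑ s : S, ρ s * ((Matrix.of m) ^ n) s u) * m u t := by
          simp_rw [Finset.mul_sum, Finset.sum_mul]
          rw [Finset.sum_comm]
          simp [Matrix.of_apply, mul_assoc]
      _ = r ^ n * (r * ρ t) := by simp_rw [ih, mul_assoc, ← Finset.mul_sum, hρ_eig]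
      _ = r ^ (n+1) * ρ t := by ring

end Aux

/-- **Lemma 3.3, second part (two-dimensional marginal of the invariant law).**
If `σ̄` is a probability measure on `S × 𝒮` invariant for the biased kernel `Q̄`, then
for all `t, u ∈ S`, `σ̄{(s,x) : s = t and x_0 = u} = ρ(t)·m(t,u)·h(u)/r`. -/
theorem invariant_law_two_dim_marginal
    {S : Type*} [Fintype S] [Nonempty S] [DecidableEq S]
    [TopologicalSpace S] [DiscreteTopology S]
    [MeasurableSpace S] [BorelSpace S]
    (m : S → S → ℝ)
    (hm_nonneg : ∀ s t, 0 ≤ m s t)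
    (hm_prim : ∃ k : ℕ, 1 ≤ k ∧ ∀ s t, 0 < ((Matrix.of m) ^ k) s t)
    (τ : ℕ → ℝ)
    (hτ_nonneg : ∀ j, 0 ≤ τ j) (hτ_sum : HasSum τ 1)
    (hτ_zero : 0 < τ 0)
    (hτ_mean : Summable fun j : ℕ => (j : ℝ) * τ j)
    -- Perron–Frobenius data for `m`
    (r : ℝ) (hr_pos : 0 < r)
    (h : S → ℝ) (hh_pos : ∀ s, 0 < h s)
    (hh_eig : ∀ s, ∑ t : S, m s t * h t = r * h s)
    (ρ : S → ℝ) (hρ_nonneg : ∀ s, 0 ≤ ρ s) (hρ_sum : ∑ s : S, ρ s = 1)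
    (hρ_eig : ∀ t, ∑ s : S, ρ s * m s t = r * ρ t)
    (hρh : ∑ s : S, ρ s * h s = 1)
    -- the biased kernel `Q̄`
    (Q : Kernel (S × (ℕ → S)) (S × (ℕ → S))) [IsMarkovKernel Q]
    (hQ : ∀ (p : S × (ℕ → S)) (A : Set (S × (ℕ → S))), MeasurableSet A →
      (Q p A).toReal = ∑' j : ℕ, τ j * ∑ t : S,
        (m (p.2 j) t * h t / (r * h (p.2 j))) *
          A.indicator (fun _ => (1 : ℝ)) (p.2 j, memCons t p.2))
    -- an invariant probability measure
    (σ : Measure (S × (ℕ → S))) (hσ_prob : IsProbabilityMeasure σ)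
    (hσ_inv : σ.bind (fun p => Q p) = σ) :
    ∀ t u : S,
      (σ {p : S × (ℕ → S) | p.1 = t ∧ p.2 0 = u}).toReal = ρ t * m t u * h u / r := by
  
  -- notation
  set Mb : S → S → ℝ := fun s t => m s t * h t / (r * h s) with hMb_def
  have hMb_nonneg : ∀ s t, 0 ≤ Mb s t := by
    intro s t
    exact div_nonneg (mul_nonneg (hm_nonneg s t) (hh_pos t).le)
      (mul_nonneg hr_pos.le (hh_pos s).le)
  have hMb_row : ∀ s, ∑ t : S, Mb s t = 1 := by
    intro s
    simp only [hMb_def]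
    have hpos : (0:ℝ) < r * h s := mul_pos hr_pos (hh_pos s)
    rw [← Finset.sum_div, hh_eig s, div_self hpos.ne']
  -- cylinder sets on the second coordinate
  set B : ℕ → S → Set (S × (ℕ → S)) := fun j t => {p | p.2 j = t} with hB_def
  have hB_meas : ∀ j t, MeasurableSet (B j t) := by
    intro j t
    have hm : Measurable fun p : S × (ℕ → S) => p.2 j :=
      (measurable_pi_apply j).comp measurable_snd
    exact hm (measurableSet_singleton t)
  set f : ℕ → S → ℝ := fun j t => (σ (B j t)).toReal with hf_def
  have hf_nonneg : ∀ j t, 0 ≤ f j t := fun j t => ENNReal.toReal_nonneg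
  -- invariance in integral form
  have hMbeq : ∀ (s t : S), m s t * h t / (r * h s) = Mb s t := fun _ _ => rfl
  have hMb_le : ∀ s t, Mb s t ≤ 1 := by
    intro s t
    calc Mb s t ≤ ∑ t' : S, Mb s t' :=
          Finset.single_le_sum (fun t' _ => hMb_nonneg s t') (Finset.mem_univ t)
      _ = 1 := hMb_row s
  have key : ∀ A : Set (S × (ℕ → S)), MeasurableSet A →
      (σ A).toReal = ∫ p, (Q p A).toReal ∂σ := by
    intro A hA
    conv_lhs => rw [← hσ_inv]
    rw [Measure.bind_apply hA (Q.measurable.aemeasurable)]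
    exact (integral_toReal (Q.measurable_coe hA).aemeasurable
      (ae_of_all _ fun p => measure_lt_top (Q p) A)).symm
  have hindint : ∀ (j : ℕ) (s : S),
      ∫ p, (B j s).indicator (fun _ => (1:ℝ)) p ∂σ = f j s := by
    intro j s
    rw [integral_indicator_const (1:ℝ) (hB_meas j s), smul_eq_mul, mul_one]
    rfl
  have interchange : ∀ (c : ℕ → (S × (ℕ → S)) → ℝ),
      (∀ j, Measurable (c j)) → (∀ j p, 0 ≤ c j p) → (∀ j p, c j p ≤ 1) →
      ∫ p, ∑' j : ℕ, τ j * c j p ∂σ = ∑' j : ℕ, τ j * ∫ p, c j p ∂σ := by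
    intro c hcm h0 h1
    rw [integral_tsum (f := fun j p => τ j * c j p) (fun j => (measurable_const.mul (hcm j)).aestronglyMeasurable) ?_]
    · exact tsum_congr fun j => integral_const_mul _ _
    · have hb : ∀ j, ∫⁻ p, (‖τ j * c j p‖₊ : ENNReal) ∂σ ≤ ENNReal.ofReal (τ j) := by
        intro j
        have hpt : ∀ p, (‖τ j * c j p‖₊ : ENNReal) ≤ ENNReal.ofReal (τ j) := by
          intro p
          rw [← ENNReal.ofReal_coe_nnreal, coe_nnnorm]
          apply ENNReal.ofReal_le_ofReal
          rw [Real.norm_eq_abs, abs_mul, abs_of_nonneg (hτ_nonneg j),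
            abs_of_nonneg (h0 j p)]
          calc τ j * c j p ≤ τ j * 1 := mul_le_mul_of_nonneg_left (h1 j p) (hτ_nonneg j)
            _ = τ j := mul_one _
        calc ∫⁻ p, (‖τ j * c j p‖₊ : ENNReal) ∂σ
            ≤ ∫⁻ _, ENNReal.ofReal (τ j) ∂σ := lintegral_mono hpt
          _ = ENNReal.ofReal (τ j) := by simp
      refine ne_top_of_le_ne_top ?_ (ENNReal.tsum_le_tsum hb)
      rw [← ENNReal.ofReal_tsum_of_nonneg hτ_nonneg hτ_sum.summable, hτ_sum.tsum_eq]
      exact ENNReal.ofReal_ne_top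
  -- the indicator appearing in hQ, rewritten via membership
  -- step (a): one-step shift invariance
  have shift : ∀ (n : ℕ) (t0 : S), f (n+1) t0 = f n t0 := by
    intro n t0
    have hA := hB_meas (n+1) t0
    calc f (n+1) t0 = ∫ p, (Q p (B (n+1) t0)).toReal ∂σ := key _ hA
      _ = ∫ p, (B n t0).indicator (fun _ => (1:ℝ)) p ∂σ := by
          refine integral_congr_ae (ae_of_all _ fun p => ?_)
          show (Q p (B (n+1) t0)).toReal = (B n t0).indicator (fun _ => (1:ℝ)) p
          rw [hQ p _ hA]
          have hind : ∀ (j : ℕ) (t : S),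
              (B (n+1) t0).indicator (fun _ => (1:ℝ)) (p.2 j, memCons t p.2)
                = (B n t0).indicator (fun _ => (1:ℝ)) p := by
            intro j t
            simp only [Set.indicator_apply, hB_def, Set.mem_setOf_eq, memCons]
          simp_rw [hMbeq, hind, ← Finset.sum_mul, hMb_row, one_mul]
          rw [tsum_mul_right, hτ_sum.tsum_eq, one_mul]
      _ = f n t0 := hindint n t0
  have fconst : ∀ (j : ℕ) (t0 : S), f j t0 = f 0 t0 := by
    intro j
    induction j with
    | zero => intro t0; rfl
    | succ n ih => intro t0; rw [shift n t0, ih t0]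
  -- sum to one
  have fsum : ∑ t : S, f 0 t = 1 := by
    have hdisj : Pairwise (Function.onFun Disjoint fun t : S => B 0 t) := by
      intro a b hab
      simp only [Function.onFun, hB_def]
      rw [Set.disjoint_left]
      rintro p hpa hpb
      exact hab (((hpa : p.2 0 = a)).symm.trans (hpb : p.2 0 = b))
    have hU : σ (⋃ t : S, B 0 t) = ∑' t : S, σ (B 0 t) :=
      measure_iUnion hdisj fun t => hB_meas 0 t
    have huniv : (⋃ t : S, B 0 t) = Set.univ := by
      ext p; simp [hB_def]
    rw [huniv, measure_univ, tsum_fintype] at hU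
    have h2 := congrArg ENNReal.toReal hU
    rw [ENNReal.toReal_one, ENNReal.toReal_sum (fun t _ => measure_ne_top σ _)] at h2
    exact h2.symm
  -- stationarity of f 0
  have fstat : ∀ u : S, ∑ s : S, f 0 s * Mb s u = f 0 u := by
    intro u
    symm
    have hA := hB_meas 0 u
    have hpt : ∀ p : S × (ℕ → S),
        (Q p (B 0 u)).toReal = ∑' j : ℕ, τ j * Mb (p.2 j) u := by
      intro p
      rw [hQ p _ hA]
      refine tsum_congr fun j => ?_
      congr 1
      have hind : ∀ t : S, (B 0 u).indicator (fun _ => (1:ℝ)) (p.2 j, memCons t p.2)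
          = if t = u then 1 else 0 := by
        intro t
        simp [Set.indicator_apply, hB_def, memCons]
        exact if_congr Iff.rfl rfl rfl
      simp_rw [hMbeq, hind, mul_ite, mul_one, mul_zero]
      rw [Finset.sum_ite_eq' Finset.univ u fun t => Mb (p.2 j) t]
      simp
    have hintj : ∀ j : ℕ, ∫ p, Mb (p.2 j) u ∂σ = ∑ s : S, Mb s u * f j s := by
      intro j
      have hexp : ∀ p : S × (ℕ → S),
          Mb (p.2 j) u = ∑ s : S, (B j s).indicator (fun _ => Mb s u) p := by
        intro p
        have hi : ∀ s : S, (B j s).indicator (fun _ => Mb s u) p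
            = if p.2 j = s then Mb s u else 0 := by
          intro s; simp [Set.indicator_apply, hB_def]
        simp_rw [hi]
        rw [Finset.sum_ite_eq Finset.univ (p.2 j) fun s => Mb s u]
        simp
      calc ∫ p, Mb (p.2 j) u ∂σ
          = ∫ p, ∑ s : S, (B j s).indicator (fun _ => Mb s u) p ∂σ :=
            integral_congr_ae (ae_of_all _ hexp)
        _ = ∑ s : S, ∫ p, (B j s).indicator (fun _ => Mb s u) p ∂σ :=
            integral_finset_sum _ fun s _ =>
              (integrable_const (Mb s u)).indicator (hB_meas j s)
        _ = ∑ s : S, Mb s u * f j s := by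
            refine Finset.sum_congr rfl fun s _ => ?_
            rw [integral_indicator_const (Mb s u) (hB_meas j s), smul_eq_mul, mul_comm]
            rfl
    have hcm : ∀ j : ℕ, Measurable fun p : S × (ℕ → S) => Mb (p.2 j) u :=
      fun j => (measurable_of_countable fun s => Mb s u).comp
        ((measurable_pi_apply j).comp measurable_snd)
    calc f 0 u = ∫ p, (Q p (B 0 u)).toReal ∂σ := key _ hA
      _ = ∫ p, ∑' j : ℕ, τ j * Mb (p.2 j) u ∂σ :=
          integral_congr_ae (ae_of_all _ hpt)
      _ = ∑' j : ℕ, τ j * ∫ p, Mb (p.2 j) u ∂σ :=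
          interchange _ hcm (fun j p => hMb_nonneg _ _) (fun j p => hMb_le _ _)
      _ = ∑' j : ℕ, τ j * ∑ s : S, Mb s u * f 0 s := by
          refine tsum_congr fun j => ?_
          rw [hintj j]
          congr 1
          exact Finset.sum_congr rfl fun s _ => by rw [fconst j s]
      _ = ∑ s : S, Mb s u * f 0 s := by
          rw [tsum_mul_right, hτ_sum.tsum_eq, one_mul]
      _ = ∑ s : S, f 0 s * Mb s u := Finset.sum_congr rfl fun s _ => mul_comm _ _
    
  -- ρ is strictly positive
  have hρ_pos : ∀ t, 0 < ρ t := by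
    obtain ⟨k, hk1, hkpos⟩ := hm_prim
    have hpow := left_eig_pow m r ρ hρ_eig k
    obtain ⟨s0, hs0⟩ : ∃ s0 : S, 0 < ρ s0 := by
      by_contra hcon
      push_neg at hcon
      have hz : ∀ s : S, ρ s = 0 := fun s => le_antisymm (hcon s) (hρ_nonneg s)
      rw [Finset.sum_congr rfl fun s _ => hz s, Finset.sum_const_zero] at hρ_sum
      norm_num at hρ_sum
    intro t
    have hge : ρ s0 * (Matrix.of m ^ k) s0 t ≤ ∑ s : S, ρ s * (Matrix.of m ^ k) s t :=
      Finset.single_le_sum (fun s _ => mul_nonneg (hρ_nonneg s) (hkpos s t).le)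
        (Finset.mem_univ s0)
    rw [hpow t] at hge
    have hpos : 0 < r ^ k * ρ t := lt_of_lt_of_le (mul_pos hs0 (hkpos s0 t)) hge
    nlinarith [pow_pos hr_pos k]
  -- identify f 0 with ρ·h
  have fid : ∀ t, f 0 t = ρ t * h t := by
    obtain ⟨k, hk1, hkpos⟩ := hm_prim
    have hMbk : ∀ s t : S, 0 < ((Matrix.of Mb) ^ k) s t := by
      intro s t
      rw [barpow m r h hr_pos hh_pos k s t]
      exact div_pos (mul_pos (hkpos s t) (hh_pos t))
        (mul_pos (pow_pos hr_pos k) (hh_pos s))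
    have hπstat : ∀ u : S, ∑ s : S, (ρ s * h s) * Mb s u = ρ u * h u := by
      intro u
      have : ∀ s : S, (ρ s * h s) * Mb s u = (ρ s * m s u) * (h u / r) := by
        intro s
        simp only [hMb_def]
        have h1 : h s ≠ 0 := (hh_pos s).ne'
        have h2 : r ≠ 0 := hr_pos.ne'
        field_simp
      simp_rw [this, ← Finset.sum_mul, hρ_eig u]
      field_simp
    have := stationary_unique Mb k hMbk (f 0) (fun t => ρ t * h t)
      (hf_nonneg 0) (fun s => mul_pos (hρ_pos s) (hh_pos s))
      fsum hρh fstat hπstat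
    exact fun t => congrFun this t
  -- final computation
  intro t u
  have hAm : MeasurableSet {p : S × (ℕ → S) | p.1 = t ∧ p.2 0 = u} :=
    (measurable_fst (measurableSet_singleton t)).inter (hB_meas 0 u)
  have hpt : ∀ p : S × (ℕ → S),
      (Q p {p : S × (ℕ → S) | p.1 = t ∧ p.2 0 = u}).toReal
        = ∑' j : ℕ, τ j * (Mb t u * (B j t).indicator (fun _ => (1:ℝ)) p) := by
    intro p
    rw [hQ p _ hAm]
    refine tsum_congr fun j => ?_
    congr 1
    have hind : ∀ t' : S,
        Set.indicator {p : S × (ℕ → S) | p.1 = t ∧ p.2 0 = u} (fun _ => (1:ℝ))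
          (p.2 j, memCons t' p.2) = if p.2 j = t ∧ t' = u then 1 else 0 := by
      intro t'
      simp [Set.indicator_apply, memCons]
      exact if_congr Iff.rfl rfl rfl
    simp_rw [hMbeq, hind]
    by_cases hj : p.2 j = t
    · simp only [hj, true_and, mul_ite, mul_one, mul_zero]
      rw [Finset.sum_ite_eq' Finset.univ u fun t' => Mb t t']
      simp [hB_def, hj]
    · simp [hj, hB_def]
  have hcm : ∀ j : ℕ,
      Measurable fun p : S × (ℕ → S) => Mb t u * (B j t).indicator (fun _ => (1:ℝ)) p :=
    fun j => measurable_const.mul (measurable_const.indicator (hB_meas j t))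
  have hfin : (σ {p : S × (ℕ → S) | p.1 = t ∧ p.2 0 = u}).toReal = Mb t u * f 0 t := by
    calc (σ {p : S × (ℕ → S) | p.1 = t ∧ p.2 0 = u}).toReal
        = ∫ p, (Q p {p : S × (ℕ → S) | p.1 = t ∧ p.2 0 = u}).toReal ∂σ := key _ hAm
      _ = ∫ p, ∑' j : ℕ, τ j * (Mb t u * (B j t).indicator (fun _ => (1:ℝ)) p) ∂σ :=
          integral_congr_ae (ae_of_all _ hpt)
      _ = ∑' j : ℕ, τ j * ∫ p, Mb t u * (B j t).indicator (fun _ => (1:ℝ)) p ∂σ := by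
          refine interchange _ hcm (fun j p => ?_) (fun j p => ?_)
          · exact mul_nonneg (hMb_nonneg t u) (Set.indicator_nonneg (fun _ _ => zero_le_one) p)
          · have hle : (B j t).indicator (fun _ => (1:ℝ)) p ≤ 1 := by
              rw [Set.indicator_apply]; split_ifs <;> norm_num
            have h0' : 0 ≤ (B j t).indicator (fun _ => (1:ℝ)) p :=
              Set.indicator_nonneg (fun _ _ => zero_le_one) p
            calc Mb t u * (B j t).indicator (fun _ => (1:ℝ)) p
                ≤ 1 * 1 := mul_le_mul (hMb_le t u) hle h0' zero_le_one
              _ = 1 := mul_one 1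
      _ = ∑' j : ℕ, τ j * (Mb t u * f 0 t) := by
          refine tsum_congr fun j => ?_
          rw [integral_const_mul, hindint j t, fconst j t]
      _ = Mb t u * f 0 t := by
          rw [tsum_mul_right, hτ_sum.tsum_eq, one_mul]
  rw [hfin, fid t]
  show m t u * h u / (r * h t) * (ρ t * h t) = ρ t * m t u * h u / r
  have h1 : h t ≠ 0 := (hh_pos t).ne'
  have h2 : r ≠ 0 := hr_pos.ne'
  field_simp
end

section
/- Row-sum bounds for the spectral radius of the memory operator: min_{s∈S} Σ_{t∈S} m(s,t) ≤ 𝐫 ≤ max_{s∈S} Σ_{t∈S} m(s,t). -/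
open Filter Topology

/-!
For `f ≥ c ≥ 0` every `𝐦 f (𝐬)` is a `τ`-average of sums `Σ_t m(s_j, t) f(t𝐬)`, hence lies
between `μ c` and `M ‖f‖`, where `μ` and `M` are the least and largest row sums of `m`.
Iterating from the constant function `1` gives `μ ^ k ≤ ‖𝐦 ^ k‖ ≤ M ^ k`, and taking
`k`-th roots in Gelfand's formula gives `μ ≤ 𝐫 ≤ M`.
-/

section ProbabilityAverage

variable {τ : ℕ → ℝ} (hτ₀ : ∀ j, 0 ≤ τ j) (hτ : HasSum τ 1)
include hτ₀ hτ

theorem summable_mul_of_abs_le {a : ℕ → ℝ} {B : ℝ} (ha : ∀ j, |a j| ≤ B) :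
    Summable fun j => τ j * a j :=
  .of_norm_bounded (hτ.summable.mul_right B) fun j => by
    rw [Real.norm_eq_abs, abs_mul, abs_of_nonneg (hτ₀ j)]
    exact mul_le_mul_of_nonneg_left (ha j) (hτ₀ j)

theorem abs_tsum_mul_le_of_abs_le {a : ℕ → ℝ} {B : ℝ} (ha : ∀ j, |a j| ≤ B) :
    |∑' j, τ j * a j| ≤ B := by
  have hbound : ∀ j, |τ j * a j| ≤ τ j * B := fun j => by
    rw [abs_mul, abs_of_nonneg (hτ₀ j)]
    exact mul_le_mul_of_nonneg_left (ha j) (hτ₀ j)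
  have hsum := summable_mul_of_abs_le hτ₀ hτ ha
  calc |∑' j, τ j * a j| ≤ ∑' j, |τ j * a j| := by
        simpa only [Real.norm_eq_abs] using norm_tsum_le_tsum_norm hsum.norm
    _ ≤ ∑' j, τ j * B := hsum.abs.tsum_le_tsum hbound (hτ.summable.mul_right B)
    _ = B := by rw [tsum_mul_right, hτ.tsum_eq, one_mul]

theorem le_tsum_mul_of_le {a : ℕ → ℝ} {c B : ℝ} (hc : ∀ j, c ≤ a j) (ha : ∀ j, |a j| ≤ B) :
    c ≤ ∑' j, τ j * a j :=
  calc c = ∑' j, τ j * c := by rw [tsum_mul_right, hτ.tsum_eq, one_mul]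
    _ ≤ ∑' j, τ j * a j :=
        (hτ.summable.mul_right c).tsum_le_tsum (fun j => mul_le_mul_of_nonneg_left (hc j) (hτ₀ j))
          (summable_mul_of_abs_le hτ₀ hτ ha)

end ProbabilityAverage

theorem Finset.abs_sum_mul_le_of_abs_le {ι : Type*} (s : Finset ι) {w g : ι → ℝ}
    (hw : ∀ i ∈ s, 0 ≤ w i) {B : ℝ} (hg : ∀ i ∈ s, |g i| ≤ B) :
    |∑ i ∈ s, w i * g i| ≤ (∑ i ∈ s, w i) * B := by
  rw [Finset.sum_mul]
  refine (Finset.abs_sum_le_sum_abs _ _).trans (Finset.sum_le_sum fun i hi => ?_)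
  rw [abs_mul, abs_of_nonneg (hw i hi)]
  exact mul_le_mul_of_nonneg_left (hg i hi) (hw i hi)

section MemoryOperator

variable {S : Type*} [Fintype S] [TopologicalSpace S] {m : S → S → ℝ} (hm : ∀ s t, 0 ≤ m s t)

include hm in
theorem abs_sum_mul_memCons_le {M : ℝ} (hM : ∀ s, ∑ t, m s t ≤ M)
    (f : C(ℕ → S, ℝ)) (s : S) (x : ℕ → S) : |∑ t, m s t * f (memCons t x)| ≤ M * ‖f‖ :=
  (Finset.univ.abs_sum_mul_le_of_abs_le (fun t _ => hm s t) fun t _ =>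
    f.norm_coe_le_norm (memCons t x)).trans (mul_le_mul_of_nonneg_right (hM s) (norm_nonneg f))

variable {τ : ℕ → ℝ} (hτ₀ : ∀ j, 0 ≤ τ j) (hτ : HasSum τ 1)
  {T : C(ℕ → S, ℝ) →L[ℝ] C(ℕ → S, ℝ)}
  (hT : ∀ (f : C(ℕ → S, ℝ)) (x : ℕ → S),
    T f x = ∑' j : ℕ, τ j * ∑ t : S, m (x j) t * f (memCons t x))
include hm hτ₀ hτ hT

theorem norm_memoryOperator_le {M : ℝ} (hM₀ : 0 ≤ M) (hM : ∀ s, ∑ t, m s t ≤ M) : ‖T‖ ≤ M :=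
  T.opNorm_le_bound hM₀ fun f =>
    (ContinuousMap.norm_le _ (by positivity)).2 fun x => by
      rw [Real.norm_eq_abs, hT]
      exact abs_tsum_mul_le_of_abs_le hτ₀ hτ fun j => abs_sum_mul_memCons_le hm hM f (x j) x

theorem mul_le_memoryOperator_apply {μ : ℝ} (hμ : ∀ s, μ ≤ ∑ t, m s t)
    {g : C(ℕ → S, ℝ)} {c : ℝ} (hc : 0 ≤ c) (hg : ∀ y, c ≤ g y) (x : ℕ → S) :
    μ * c ≤ T g x := by
  have hrow : ∀ s, μ * c ≤ ∑ t, m s t * g (memCons t x) := fun s =>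
    calc μ * c ≤ (∑ t, m s t) * c := mul_le_mul_of_nonneg_right (hμ s) hc
      _ = ∑ t, m s t * c := Finset.sum_mul ..
      _ ≤ ∑ t, m s t * g (memCons t x) :=
          Finset.sum_le_sum fun t _ => mul_le_mul_of_nonneg_left (hg _) (hm s t)
  have hrow_le_total : ∀ s, ∑ t, m s t ≤ ∑ s', ∑ t, m s' t := fun s =>
    Finset.single_le_sum (fun s' _ => Finset.sum_nonneg fun t _ => hm s' t) (Finset.mem_univ s)
  rw [hT]
  exact le_tsum_mul_of_le hτ₀ hτ (fun j => hrow (x j))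
    fun j => abs_sum_mul_memCons_le hm hrow_le_total g (x j) x

end MemoryOperator

theorem ContinuousLinearMap.pow_le_norm_pow_of_mul_le_apply {X : Type*} [TopologicalSpace X]
    [CompactSpace X] [Nonempty X] {T : C(X, ℝ) →L[ℝ] C(X, ℝ)} {μ : ℝ} (hμ : 0 ≤ μ)
    (hT : ∀ (g : C(X, ℝ)) (c : ℝ), 0 ≤ c → (∀ y, c ≤ g y) → ∀ x, μ * c ≤ T g x) (k : ℕ) :
    μ ^ k ≤ ‖T ^ k‖ := by
  have hiterate : ∀ k : ℕ, ∀ x, μ ^ k ≤ (T ^ k) 1 x := by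
    intro k
    induction k with
    | zero => simp
    | succ k ih =>
      intro x
      rw [pow_succ', pow_succ', mul_apply_eq_comp]
      exact hT _ _ (pow_nonneg hμ k) ih x
  obtain ⟨x⟩ := ‹Nonempty X›
  calc μ ^ k ≤ (T ^ k) 1 x := hiterate k x
    _ ≤ ‖(T ^ k) 1‖ := (le_abs_self _).trans (((T ^ k) 1).norm_coe_le_norm x)
    _ ≤ ‖T ^ k‖ * ‖(1 : C(X, ℝ))‖ := (T ^ k).le_opNorm 1
    _ = ‖T ^ k‖ := by rw [norm_one, mul_one]

theorem le_of_pow_le_of_tendsto_root {a : ℕ → ℝ} {μ R : ℝ} (hμ : 0 ≤ μ) (ha : ∀ k, μ ^ k ≤ a k)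
    (hR : Tendsto (fun k : ℕ => a k ^ ((1 : ℝ) / k)) atTop (𝓝 R)) : μ ≤ R := by
  refine ge_of_tendsto hR ((eventually_ne_atTop 0).mono fun k hk => ?_)
  calc μ = (μ ^ k) ^ ((1 : ℝ) / k) := by rw [one_div, Real.pow_rpow_inv_natCast hμ hk]
    _ ≤ a k ^ ((1 : ℝ) / k) := by gcongr; exact ha k

theorem le_of_le_pow_of_tendsto_root {a : ℕ → ℝ} {M R : ℝ} (ha₀ : ∀ k, 0 ≤ a k)
    (ha : ∀ k, k ≠ 0 → a k ≤ M ^ k)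
    (hR : Tendsto (fun k : ℕ => a k ^ ((1 : ℝ) / k)) atTop (𝓝 R)) : R ≤ M := by
  have hM : 0 ≤ M := (ha₀ 1).trans ((ha 1 one_ne_zero).trans_eq (pow_one M))
  refine le_of_tendsto hR ((eventually_ne_atTop 0).mono fun k hk => ?_)
  calc a k ^ ((1 : ℝ) / k) ≤ (M ^ k) ^ ((1 : ℝ) / k) := by gcongr; exacts [ha₀ k, ha k hk]
    _ = M := by rw [one_div, Real.pow_rpow_inv_natCast hM hk]

theorem row_sum_bounds_memory_spectral_radius_general
    {S : Type*} [Fintype S] [Nonempty S]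
    [TopologicalSpace S]
    (m : S → S → ℝ)
    (hm_nonneg : ∀ s t, 0 ≤ m s t)
    (τ : ℕ → ℝ)
    (hτ_nonneg : ∀ j, 0 ≤ τ j) (hτ_sum : HasSum τ 1)
    (T : C(ℕ → S, ℝ) →L[ℝ] C(ℕ → S, ℝ))
    (hT : ∀ (f : C(ℕ → S, ℝ)) (x : ℕ → S),
      T f x = ∑' j : ℕ, τ j * ∑ t : S, m (x j) t * f (memCons t x))
    (R : ℝ)
    (hR : Tendsto (fun k : ℕ => ‖T ^ k‖ ^ ((1 : ℝ) / k)) atTop (𝓝 R)) :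
    Finset.univ.inf' Finset.univ_nonempty (fun s => ∑ t : S, m s t) ≤ R ∧
    R ≤ Finset.univ.sup' Finset.univ_nonempty (fun s => ∑ t : S, m s t) := by
  set μ := Finset.univ.inf' Finset.univ_nonempty fun s => ∑ t : S, m s t
  set M := Finset.univ.sup' Finset.univ_nonempty fun s => ∑ t : S, m s t
  have hμ_le : ∀ s, μ ≤ ∑ t, m s t := fun s => Finset.inf'_le _ (Finset.mem_univ s)
  have hle_M : ∀ s, ∑ t, m s t ≤ M := fun s => Finset.le_sup' (fun s => ∑ t, m s t) (Finset.mem_univ s)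
  have hμ₀ : 0 ≤ μ :=
    Finset.le_inf' _ _ fun s _ => Finset.sum_nonneg fun t _ => hm_nonneg s t
  have hM₀ : 0 ≤ M := hμ₀.trans ((hμ_le (Classical.arbitrary S)).trans (hle_M _))
  have hT_le : ‖T‖ ≤ M := norm_memoryOperator_le hm_nonneg hτ_nonneg hτ_sum hT hM₀ hle_M
  refine ⟨le_of_pow_le_of_tendsto_root hμ₀ ?_ hR,
    le_of_le_pow_of_tendsto_root (fun k => (T ^ k).opNorm_nonneg) (fun k hk => ?_) hR⟩
  · exact T.pow_le_norm_pow_of_mul_le_apply hμ₀ fun g c hc hg =>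
      mul_le_memoryOperator_apply hm_nonneg hτ_nonneg hτ_sum hT hμ_le hc hg
  · exact (norm_pow_le' T (Nat.pos_of_ne_zero hk)).trans
      (pow_le_pow_left₀ (norm_nonneg T) hT_le k)

/-- **Row-sum bounds for the spectral radius of the memory operator.**
`min_s Σ_t m(s,t) ≤ R ≤ max_s Σ_t m(s,t)`, where `R` is the spectral radius of the
memory operator `𝐦` acting on `C(𝒮, ℝ)` (given by Gelfand's formula). -/
theorem row_sum_bounds_memory_spectral_radius
    {S : Type*} [Fintype S] [Nonempty S] [DecidableEq S]
    [TopologicalSpace S] [DiscreteTopology S]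
    (m : S → S → ℝ)
    (hm_nonneg : ∀ s t, 0 ≤ m s t)
    (hm_prim : ∃ k : ℕ, 1 ≤ k ∧ ∀ s t, 0 < ((Matrix.of m) ^ k) s t)
    (τ : ℕ → ℝ)
    (hτ_nonneg : ∀ j, 0 ≤ τ j) (hτ_sum : HasSum τ 1)
    (hτ_zero : 0 < τ 0)
    (hτ_mean : Summable fun j : ℕ => (j : ℝ) * τ j)
    (T : C(ℕ → S, ℝ) →L[ℝ] C(ℕ → S, ℝ))
    (hT : ∀ (f : C(ℕ → S, ℝ)) (x : ℕ → S),
      T f x = ∑' j : ℕ, τ j * ∑ t : S, m (x j) t * f (memCons t x))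
    (R : ℝ)
    (hR : Tendsto (fun k : ℕ => ‖T ^ k‖ ^ ((1 : ℝ) / k)) atTop (𝓝 R)) :
    Finset.univ.inf' Finset.univ_nonempty (fun s => ∑ t : S, m s t) ≤ R ∧
    R ≤ Finset.univ.sup' Finset.univ_nonempty (fun s => ∑ t : S, m s t) :=
  row_sum_bounds_memory_spectral_radius_general m hm_nonneg τ hτ_nonneg hτ_sum T hT R hR
end

section
/- Non-compactness (Remark after Proposition 2.1): Assume S has at least two elements, every row of m has at least one strictly positive entry, and the support {j ∈ ℕ : τ(j) > 0} of τ is unbounded. Then 𝐦, viewed as a bounded linear operator on C(𝒮, ℝ), is not a compact operator. -/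
/-- **Non-compactness (Remark after Proposition 2.1).** If `S` has at least two
elements, every row of `m` has a strictly positive entry, and the support of `τ` is
unbounded, then the memory operator `𝐦`, viewed as a bounded linear operator on
`C(𝒮, ℝ)`, is not a compact operator. -/
theorem memory_operator_not_compact
    {S : Type*} [Fintype S] [Nontrivial S] [DecidableEq S]
    [TopologicalSpace S] [DiscreteTopology S]
    (m : S → S → ℝ)
    (hm_nonneg : ∀ s t, 0 ≤ m s t)
    (hm_row : ∀ s, ∃ t, 0 < m s t)
    (τ : ℕ → ℝ)
    (hτ_nonneg : ∀ j, 0 ≤ τ j) (hτ_sum : HasSum τ 1)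
    (hτ_supp : ∀ N : ℕ, ∃ j ≥ N, 0 < τ j)
    (T : C(ℕ → S, ℝ) →L[ℝ] C(ℕ → S, ℝ))
    (hT : ∀ (f : C(ℕ → S, ℝ)) (x : ℕ → S),
      T f x = ∑' j : ℕ, τ j * ∑ t : S, m (x j) t * f (memCons t x)) :
    ¬ IsCompactOperator T := by
  classical
  -- row sums
  set M : S → ℝ := fun s => ∑ t : S, m s t with hM_def
  have hM_nonneg : ∀ s, 0 ≤ M s := fun s => Finset.sum_nonneg fun t _ => hm_nonneg s t
  -- minimum row sum c > 0
  obtain ⟨s₀, -, hs₀⟩ := Finset.exists_min_image (Finset.univ : Finset S) M Finset.univ_nonempty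
  set c : ℝ := M s₀ with hc_def
  have hc_le : ∀ s, c ≤ M s := fun s => hs₀ s (Finset.mem_univ s)
  have hc_pos : 0 < c := by
    obtain ⟨t₀, ht₀⟩ := hm_row s₀
    exact lt_of_lt_of_le ht₀
      (Finset.single_le_sum (fun t _ => hm_nonneg s₀ t) (Finset.mem_univ t₀))
  -- upper bound for row sums
  set B : ℝ := ∑ s : S, M s with hB_def
  have hMB : ∀ s, M s ≤ B := fun s =>
    Finset.single_le_sum (fun t _ => hM_nonneg t) (Finset.mem_univ s)
  -- summability of k ↦ τ k * M (x k), and lower bound for the tsum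
  have hsum : ∀ x : ℕ → S, Summable fun k => τ k * M (x k) := by
    intro x
    refine Summable.of_nonneg_of_le
      (fun k => mul_nonneg (hτ_nonneg k) (hM_nonneg _))
      (fun k => mul_le_mul_of_nonneg_left (hMB _) (hτ_nonneg k))
      (hτ_sum.summable.mul_right B)
  have hC : ∀ x : ℕ → S, c ≤ ∑' k, τ k * M (x k) := by
    intro x
    have h1 : (∑' k, τ k * c) = c := by
      rw [tsum_mul_right, hτ_sum.tsum_eq, one_mul]
    calc c = ∑' k, τ k * c := h1.symm
      _ ≤ ∑' k, τ k * M (x k) :=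
        Summable.tsum_le_tsum (fun k => mul_le_mul_of_nonneg_left (hc_le _) (hτ_nonneg k))
          (hτ_sum.summable.mul_right c) (hsum x)
  -- pick two distinct elements
  obtain ⟨a, b, hab⟩ := exists_pair_ne S
  -- choose a strictly increasing sequence in the support of τ, with values ≥ 1
  choose J hJge hJpos using hτ_supp
  set j : ℕ → ℕ := fun n => Nat.rec (J 1) (fun _ prev => J (prev + 1)) n with hj_def
  have hj_succ : ∀ n, j (n + 1) = J (j n + 1) := fun n => rfl
  have hj_mono : StrictMono j := by
    apply strictMono_nat_of_lt_succ
    intro n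
    have := hJge (j n + 1)
    rw [hj_succ]
    omega
  have hj_pos : ∀ n, 1 ≤ j n := by
    intro n
    cases n with
    | zero => exact hJge 1
    | succ k => have := hJge (j k + 1); rw [hj_succ]; omega
  have hj_tau : ∀ n, 0 < τ (j n) := by
    intro n
    cases n with
    | zero => exact hJpos 1
    | succ k => rw [hj_succ]; exact hJpos _
  -- the test functions
  have hcont : ∀ n, Continuous fun x : ℕ → S => if x (j n) = a then (1 : ℝ) else 0 := by
    intro n
    exact (continuous_of_discreteTopology
      (f := fun s : S => if s = a then (1 : ℝ) else 0)).comp (continuous_apply (j n))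
  set f : ℕ → C(ℕ → S, ℝ) := fun n => ⟨_, hcont n⟩ with hf_def
  have hf_apply : ∀ n x, f n x = if x (j n) = a then (1 : ℝ) else 0 := fun n x => rfl
  have hf_norm : ∀ n, ‖f n‖ ≤ 1 := by
    intro n
    refine ContinuousMap.norm_le _ zero_le_one |>.mpr fun x => ?_
    rw [hf_apply]
    split <;> simp
  -- key evaluation formula
  have hTf : ∀ n (x : ℕ → S),
      T (f n) x = (if x (j n - 1) = a then (1 : ℝ) else 0) * ∑' k, τ k * M (x k) := by
    intro n x
    rw [hT]
    obtain ⟨p, hp⟩ : ∃ p, j n = p + 1 := ⟨j n - 1, (Nat.succ_pred_eq_of_pos (hj_pos n)).symm⟩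
    have hmem : ∀ t, f n (memCons t x) = if x (j n - 1) = a then (1 : ℝ) else 0 := by
      intro t
      rw [hf_apply, hp]
      rfl
    have hterm : ∀ k, τ k * ∑ t : S, m (x k) t * f n (memCons t x)
        = (if x (j n - 1) = a then (1 : ℝ) else 0) * (τ k * M (x k)) := by
      intro k
      simp only [hmem]
      rw [← Finset.sum_mul]
      ring
    rw [tsum_congr hterm, tsum_mul_left]
  -- separation of the images
  have hsep : ∀ n n', n ≠ n' → c ≤ ‖T (f n) - T (f n')‖ := by
    intro n n' hne
    set x : ℕ → S := fun i => if i = j n - 1 then a else b with hx_def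
    have hxn : x (j n - 1) = a := by simp [hx_def]
    have hxn' : x (j n' - 1) ≠ a := by
      have hne' : j n' - 1 ≠ j n - 1 := by
        intro h
        have := hj_pos n; have := hj_pos n'
        exact hne (hj_mono.injective (by omega))
      simp [hx_def, hne', hab.symm]
    have h1 : T (f n) x = ∑' k, τ k * M (x k) := by rw [hTf, hxn, if_pos rfl, one_mul]
    have h2 : T (f n') x = 0 := by rw [hTf, if_neg hxn', zero_mul]
    have h3 : (T (f n) - T (f n')) x = ∑' k, τ k * M (x k) := by
      rw [ContinuousMap.sub_apply, h1, h2, sub_zero]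
    calc c ≤ ∑' k, τ k * M (x k) := hC x
      _ = (T (f n) - T (f n')) x := h3.symm
      _ ≤ |(T (f n) - T (f n')) x| := le_abs_self _
      _ ≤ ‖T (f n) - T (f n')‖ := by
        exact (T (f n) - T (f n')).norm_coe_le_norm x
  -- now suppose T is compact
  intro hcomp
  obtain ⟨K, hK, hKmem⟩ := hcomp
  obtain ⟨ε, hε, hball⟩ := Metric.mem_nhds_iff.mp hKmem
  set g : ℕ → C(ℕ → S, ℝ) := fun n => T ((ε / 2) • f n) with hg_def
  have hgK : ∀ n, g n ∈ K := by
    intro n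
    apply hball
    rw [Metric.mem_ball, dist_zero_right, norm_smul ((ε : ℝ)/2) (f n)]
    have : ‖(ε / 2 : ℝ)‖ = ε / 2 := by
      rw [Real.norm_eq_abs, abs_of_pos (by linarith)]
    rw [this]
    calc ε / 2 * ‖f n‖ ≤ ε / 2 * 1 := by
          exact mul_le_mul_of_nonneg_left (hf_norm n) (by linarith)
      _ < ε := by linarith
  have hgsep : ∀ n n', n ≠ n' → ε / 2 * c ≤ dist (g n) (g n') := by
    intro n n' hne
    have : g n - g n' = (ε / 2) • (T (f n) - T (f n')) := by
      rw [hg_def]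
      simp only [map_smul, smul_sub]
    rw [dist_eq_norm, this, norm_smul ((ε : ℝ)/2) (T (f n) - T (f n')), Real.norm_eq_abs,
      abs_of_pos (by linarith : (0:ℝ) < ε/2)]
    exact mul_le_mul_of_nonneg_left (hsep n n' hne) (by linarith)
  obtain ⟨L, -, φ, hφ, hconv⟩ := hK.tendsto_subseq hgK
  have hcauchy := hconv.cauchySeq
  rw [Metric.cauchySeq_iff] at hcauchy
  obtain ⟨N, hN⟩ := hcauchy (ε / 2 * c) (by positivity)
  have hdist := hN (N + 1) (by omega) N (by omega)
  have hneq : φ (N + 1) ≠ φ N := (hφ (Nat.lt_succ_self N)).ne'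
  exact absurd hdist (not_lt.mpr (hgsep _ _ hneq))
end
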